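/- arXiv:2401.07303 — 12 statements merged into one kernel-verified Lean document; each statement's English description precedes it below -/
import Mathlib

section
/- Let k be an algebraically closed field of characteristic 2 and let L be a Lie algebra over k of dimension at most 3. If there exists a nonzero element e ∈ L such that e lies in the range of (ad e)², then L has dimension exactly 3 and there is a basis {e', h', f'} of L with e' = e, ⁅h',e'⁆ = e', ⁅h',f'⁆ = f' and ⁅e',f'⁆ = h'; in particular L is isomorphic to the 3-dimensional simple Lie algebra 𝔰. -/
/-!
Put `h = ⁅e, f⁆` for a preimage `f` of `e` under `(ad e)²`. Then `ad e` maps `f ↦ h ↦ e ↦ 0`,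
so `e, h, f` are linearly independent and form a basis of `L`. The Jacobi identity gives
`⁅e, ⁅h, f⁆ - f⁆ = 0`, and the centralizer of `e` is `k ∙ e`, so `⁅h, f⁆ = f + α • e`.
In characteristic 2 we have `⁅h, e⁆ = e`, and with `a² = α` the basis
`e, h + a • e, a • h + f` satisfies the relations of `𝔰`.
-/

open Submodule

theorem Submodule.span_triple_le_span_add_smul {R M : Type*} [CommRing R] [AddCommGroup M]
    [Module R M] (x y z : M) (a : R) :
    span R {x, y, z} ≤ span R {x, y + a • x, a • y + z} := by
  set S := span R {x, y + a • x, a • y + z}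
  have hx : x ∈ S := subset_span (by simp)
  have hy : y ∈ S := by
    simpa using sub_mem (subset_span (by simp) : y + a • x ∈ S) (smul_mem S a hx)
  have hz : z ∈ S := by
    simpa using sub_mem (subset_span (by simp) : a • y + z ∈ S) (smul_mem S a hy)
  rw [span_le, Set.insert_subset_iff, Set.insert_subset_iff, Set.singleton_subset_iff]
  exact ⟨hx, hy, hz⟩

namespace LieAlgebra

section CommRing

variable {R L : Type*} [CommRing R] [LieRing L] [LieAlgebra R L]

variable (R) in
theorem lie_comm_of_charP_two [CharP R 2] (x y : L) : ⁅y, x⁆ = ⁅x, y⁆ := by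
  rw [← lie_skew, ← neg_one_smul R, CharTwo.neg_eq, one_smul]

variable {e f : L} (hef : ⁅e, ⁅e, f⁆⁆ = e)
include hef

theorem lie_smul_add_smul_add_smul_of_lie_lie_eq_self (a b c : R) :
    ⁅e, a • e + b • ⁅e, f⁆ + c • f⁆ = b • e + c • ⁅e, f⁆ := by
  simp only [lie_add, lie_smul, lie_self, smul_zero, zero_add, hef]

theorem sl2_relations_of_charP_two [CharP R 2] {a : R} (hhf : ⁅⁅e, f⁆, f⁆ = f + (a * a) • e) :
    ⁅⁅e, f⁆ + a • e, e⁆ = e ∧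
      ⁅⁅e, f⁆ + a • e, a • ⁅e, f⁆ + f⁆ = a • ⁅e, f⁆ + f ∧
      ⁅e, a • ⁅e, f⁆ + f⁆ = ⁅e, f⁆ + a • e := by
  have hhe : ⁅⁅e, f⁆, e⁆ = e := by rw [lie_comm_of_charP_two R, hef]
  refine ⟨by simp [hhe], ?_, by rw [lie_add, lie_smul, hef, add_comm]⟩
  simp only [lie_add, add_lie, lie_smul, smul_lie, lie_self, zero_add, hhf, hef, smul_smul]
  calc (a * a) • e + (f + (a * a) • e + a • ⁅e, f⁆)
      = (a * a + a * a) • e + (a • ⁅e, f⁆ + f) := by rw [add_smul]; abel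
    _ = a • ⁅e, f⁆ + f := by rw [CharTwo.add_self_eq_zero, zero_smul, zero_add]

end CommRing

section Field

variable {K L : Type*} [Field K] [LieRing L] [LieAlgebra K L] {e f : L}
  (hef : ⁅e, ⁅e, f⁆⁆ = e) (he : e ≠ 0)
include hef he

theorem linearIndependent_pair_of_lie_lie_eq_self : LinearIndependent K ![e, ⁅e, f⁆] := by
  refine LinearIndependent.pair_iff.mpr fun b c hbc ↦ ?_
  have hc : c • e = 0 := by simpa [hef] using congrArg (⁅e, ·⁆) hbc
  obtain rfl : c = 0 := (smul_eq_zero.mp hc).resolve_right he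
  rw [zero_smul, add_zero] at hbc
  exact ⟨(smul_eq_zero.mp hbc).resolve_right he, rfl⟩

theorem linearIndependent_triple_of_lie_lie_eq_self : LinearIndependent K ![e, ⁅e, f⁆, f] := by
  rw [Fintype.linearIndependent_iff]
  intro g hg
  simp only [Fin.sum_univ_three, Matrix.cons_val] at hg
  have h12 := LinearIndependent.pair_iff.mp (linearIndependent_pair_of_lie_lie_eq_self hef he)
    (g 1) (g 2) (by rw [← lie_smul_add_smul_add_smul_of_lie_lie_eq_self hef (g 0), hg, lie_zero])
  rw [h12.1, h12.2, zero_smul, zero_smul, add_zero, add_zero] at hg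
  have h0 := (smul_eq_zero.mp hg).resolve_right he
  intro i
  fin_cases i
  exacts [h0, h12.1, h12.2]

theorem mem_span_singleton_of_lie_eq_zero (hspan : ⊤ ≤ span K {e, ⁅e, f⁆, f})
    {x : L} (hx : ⁅e, x⁆ = 0) : x ∈ K ∙ e := by
  obtain ⟨a, b, c, rfl⟩ := mem_span_triple.mp (hspan (mem_top (x := x)))
  rw [lie_smul_add_smul_add_smul_of_lie_lie_eq_self hef] at hx
  obtain ⟨rfl, rfl⟩ :=
    LinearIndependent.pair_iff.mp (linearIndependent_pair_of_lie_lie_eq_self hef he) b c hx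
  simpa using smul_mem _ a (mem_span_singleton_self e)

theorem exists_lie_lie_eq_add_smul (hspan : ⊤ ≤ span K {e, ⁅e, f⁆, f}) :
    ∃ α : K, ⁅⁅e, f⁆, f⁆ = f + α • e := by
  have hjacobi : ⁅e, ⁅⁅e, f⁆, f⁆⁆ = ⁅e, f⁆ := by rw [leibniz_lie, hef, lie_self, add_zero]
  obtain ⟨α, hα⟩ := mem_span_singleton.mp <| mem_span_singleton_of_lie_eq_zero hef he hspan
    (x := ⁅⁅e, f⁆, f⁆ - f) (by rw [lie_sub, hjacobi, sub_self])
  exact ⟨α, by rw [hα, add_sub_cancel]⟩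

end Field

end LieAlgebra

open LieAlgebra in
/-- Over an algebraically closed field of characteristic 2, if a Lie algebra
of dimension at most 3 contains a nonzero element `e` lying in the range of `(ad e)²`,
then it is 3-dimensional with a basis `{e, h', f'}` (with `e = B 0`, `h' = B 1`, `f' = B 2`)
satisfying the bracket relations of the 3-dimensional simple Lie algebra `𝔰`. -/
theorem stmt_1 (k : Type*) [Field k] [IsAlgClosed k] [CharP k 2]
    (L : Type*) [LieRing L] [LieAlgebra k L] [Module.Finite k L]
    (hdim : Module.finrank k L ≤ 3)
    (e : L) (he : e ≠ 0)
    (hmem : e ∈ LinearMap.range ((LieAlgebra.ad k L e) ^ 2)) :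
    Module.finrank k L = 3 ∧
      ∃ B : Module.Basis (Fin 3) k L, B 0 = e ∧
        ⁅B 1, B 0⁆ = B 0 ∧ ⁅B 1, B 2⁆ = B 2 ∧ ⁅B 0, B 2⁆ = B 1 := by
  obtain ⟨f, hf⟩ := hmem
  have hef : ⁅e, ⁅e, f⁆⁆ = e := by simpa [pow_two] using hf
  have hli := linearIndependent_triple_of_lie_lie_eq_self (K := k) hef he
  have hfin : Module.finrank k L = 3 :=
    le_antisymm hdim (by simpa using hli.fintype_card_le_finrank)
  have hrange (x y z : L) : Set.range ![x, y, z] = {x, y, z} := by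
    rw [Matrix.range_cons, Matrix.range_cons_cons_empty, Set.singleton_union]
  have hspan : span k {e, ⁅e, f⁆, f} = ⊤ := by
    rw [← hrange]; exact hli.span_eq_top_of_card_eq_finrank (by simp [hfin])
  obtain ⟨α, hα⟩ := exists_lie_lie_eq_add_smul hef he hspan.ge
  obtain ⟨a, rfl⟩ := IsAlgClosed.exists_eq_mul_self α
  obtain ⟨h₁, h₂, h₃⟩ := sl2_relations_of_charP_two hef hα
  let B := basisOfTopLeSpanOfCardEqFinrank (R := k) ![e, ⁅e, f⁆ + a • e, a • ⁅e, f⁆ + f]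
    (by rw [hrange, ← hspan]; exact span_triple_le_span_add_smul e ⁅e, f⁆ f a) (by simp [hfin])
  exact ⟨hfin, B, by simp [B, h₁, h₂, h₃]⟩
end

section
/- Let k be a field of characteristic 2 and let L be a 3-dimensional Lie algebra over k with basis {e, h, f} satisfying ⁅h,e⁆ = e, ⁅h,f⁆ = f, ⁅e,f⁆ = h. For an element x = a•e + b•h + c•f of L (a, b, c ∈ k), the adjoint endomorphism ad x of L is nilpotent if and only if b = 0. In other words, the nilpotent cone of 𝔰 is the plane k·e ⊕ k·f. -/
/-!
Write `x = a • e + b • h + c • f`. Since `⁅h, x⁆ = a • e + c • f = x - b • h`, we get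
`ad x (a • e + c • f) = b • (a • e + c • f)`; so for `b ≠ 0` the endomorphism `ad x` has the
nonzero eigenvalue `b` (with eigenvector `a • e + c • f`, or `e` when `a = c = 0`) and cannot be
nilpotent. For `b = 0`, `ad x` sends `h` to `-x`, which it kills, and sends `e` and `f` into
`k ∙ h`, so `(ad x) ^ 3 = 0`.
-/

open LieAlgebra

theorem Module.End.eq_zero_of_isNilpotent_of_apply_eq_smul {R M : Type*} [CommRing R] [IsDomain R]
    [AddCommGroup M] [Module R M] [IsTorsionFree R M] {f : Module.End R M} (hf : IsNilpotent f)
    {μ : R} {v : M} (hv : v ≠ 0) (hfv : f v = μ • v) : μ = 0 :=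
  ((hasEigenvalue_of_hasEigenvector ⟨mem_eigenspace_iff.mpr hfv, hv⟩).isNilpotent_of_isNilpotent
    hf).eq_zero

section

variable {k L : Type*} [Field k] [LieRing L] [LieAlgebra k L] {e h f : L}

theorem lie_smul_add_smul_add_smul (hhe : ⁅h, e⁆ = e) (hhf : ⁅h, f⁆ = f) (a b c : k) :
    ⁅h, a • e + b • h + c • f⁆ = a • e + c • f := by
  simp only [lie_add, lie_smul, hhe, hhf, lie_self, smul_zero, add_zero]

theorem ad_apply_smul_add_smul_eq_smul (hhe : ⁅h, e⁆ = e) (hhf : ⁅h, f⁆ = f) (a b c : k) :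
    ad k L (a • e + b • h + c • f) (a • e + c • f) = b • (a • e + c • f) := by
  set x := a • e + b • h + c • f
  calc ⁅x, a • e + c • f⁆ = ⁅x, x - b • h⁆ := by congr 1; simp only [x]; abel
    _ = b • ⁅h, x⁆ := by rw [lie_sub, lie_self, lie_smul, ← lie_skew, smul_neg, zero_sub, neg_neg]
    _ = b • (a • e + c • f) := by rw [lie_smul_add_smul_add_smul hhe hhf]

theorem ad_smul_add_smul_pow_three_apply_eq_zero (hhe : ⁅h, e⁆ = e) (hhf : ⁅h, f⁆ = f)
    (hef : ⁅e, f⁆ = h) (a c : k) {y : L} (hy : y = e ∨ y = h ∨ y = f) :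
    (ad k L (a • e + c • f) ^ 3) y = 0 := by
  set x := a • e + c • f
  have hxh : ad k L x h = -x := by
    rw [ad_apply, ← lie_skew, show x = a • e + (0 : k) • h + c • f by simp [x],
      lie_smul_add_smul_add_smul hhe hhf, zero_smul, add_zero]
  have hsq : (ad k L x ^ 2) h = 0 := by
    rw [sq, Module.End.mul_apply, hxh, map_neg, ad_apply, lie_self, neg_zero]
  have hline (t : k) : (ad k L x ^ 2) (t • h) = 0 := by rw [map_smul, hsq, smul_zero]
  have hfe : ⁅f, e⁆ = -h := by rw [← lie_skew, hef]
  rcases hy with rfl | rfl | rfl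
  · rw [pow_succ, Module.End.mul_apply, show ad k L x y = (-c) • h by
      simp only [x, ad_apply, add_lie, smul_lie, lie_self, hfe, smul_zero, zero_add, smul_neg,
        neg_smul], hline]
  · rw [pow_succ', Module.End.mul_apply, hsq, map_zero]
  · rw [pow_succ, Module.End.mul_apply, show ad k L x y = a • h by
      simp only [x, ad_apply, add_lie, smul_lie, lie_self, hef, smul_zero, add_zero], hline]

end

theorem stmt_2_general (k : Type*) [Field k]
    (L : Type*) [LieRing L] [LieAlgebra k L]
    (B : Module.Basis (Fin 3) k L)
    (hhe : ⁅B 1, B 0⁆ = B 0) (hhf : ⁅B 1, B 2⁆ = B 2) (hef : ⁅B 0, B 2⁆ = B 1)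
    (a b c : k) (x : L) (hx : x = a • B 0 + b • B 1 + c • B 2) :
    IsNilpotent (LieAlgebra.ad k L x) ↔ b = 0 := by
  subst hx
  constructor
  · intro hnil
    by_cases hw : a • B 0 + c • B 2 = 0
    · obtain ⟨rfl, rfl⟩ : a = 0 ∧ c = 0 :=
        ⟨by simpa using congr(B.repr $hw 0), by simpa using congr(B.repr $hw 2)⟩
      refine Module.End.eq_zero_of_isNilpotent_of_apply_eq_smul hnil (B.ne_zero 0) ?_
      simp [hhe]
    · exact Module.End.eq_zero_of_isNilpotent_of_apply_eq_smul hnil hw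
        (ad_apply_smul_add_smul_eq_smul hhe hhf a b c)
  · rintro rfl
    refine ⟨3, B.ext fun i => ?_⟩
    rw [zero_smul, add_zero, LinearMap.zero_apply]
    exact ad_smul_add_smul_pow_three_apply_eq_zero hhe hhf hef a c (by fin_cases i <;> simp)

/-- In the 3-dimensional Lie algebra `𝔰` over a field of characteristic 2
(basis `e = B 0`, `h = B 1`, `f = B 2` with `⁅h,e⁆ = e`, `⁅h,f⁆ = f`, `⁅e,f⁆ = h`),
the adjoint map of `x = a•e + b•h + c•f` is nilpotent iff `b = 0`. -/
theorem stmt_2 (k : Type*) [Field k] [CharP k 2]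
    (L : Type*) [LieRing L] [LieAlgebra k L]
    (B : Module.Basis (Fin 3) k L)
    (hhe : ⁅B 1, B 0⁆ = B 0) (hhf : ⁅B 1, B 2⁆ = B 2) (hef : ⁅B 0, B 2⁆ = B 1)
    (a b c : k) (x : L) (hx : x = a • B 0 + b • B 1 + c • B 2) :
    IsNilpotent (LieAlgebra.ad k L x) ↔ b = 0 :=
  stmt_2_general k L B hhe hhf hef a b c x hx
end

section
/- Let k be a field of characteristic 2 and let L be a 3-dimensional Lie algebra over k with basis {e, h, f} satisfying ⁅h,e⁆ = e, ⁅h,f⁆ = f, ⁅e,f⁆ = h. For an element x = a•e + b•h + c•f of L (a, b, c ∈ k), one has x ∈ range((ad x)²) if and only if b = 0. In other words, the nilpotent cone of 𝔰 coincides with the set M = {x ∈ 𝔰 : x ∈ im (ad x)²}. -/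
/-!
Write `x = a • e + b • h + c • f`. In characteristic 2 a direct computation gives
`(ad x)² v = r • x + b² • v` for `v = e, h, f` (with `r = c, b, a` respectively), and since
`ad x` kills `x` this yields `(ad x)³ = b² • ad x`. So if `x = (ad x)² y`, then
`b² • x = (ad x)⁴ y = (ad x)² x = 0`, whence `b = 0`. Conversely, for `b = 0` we have
`(ad x)² e = c • x` and `(ad x)² f = a • x`, so `x` lies in the range unless `a = c = 0`,
in which case `x = 0`.
-/

open LieAlgebra

theorem smul_eq_zero_of_mem_range_sq {R M : Type*} [CommSemiring R] [AddCommMonoid M]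
    [Module R M] {T : Module.End R M} {s : R} (hT : T ^ 3 = s • T) {x : M} (hx : T x = 0)
    (hxT : x ∈ LinearMap.range (T ^ 2)) : s • x = 0 := by
  obtain ⟨y, rfl⟩ := hxT
  calc s • (T ^ 2) y = (T ^ 3) (T y) := by rw [hT, pow_two]; rfl
    _ = T (T ((T ^ 2) y)) := by
      simp only [Module.End.pow_apply, Function.iterate_succ_apply', Function.iterate_zero_apply]
    _ = 0 := by rw [hx, map_zero]

theorem lie_comm_of_charTwo (k : Type*) {L : Type*} [CommRing k] [CharP k 2] [LieRing L]
    [LieAlgebra k L] (x y : L) : ⁅x, y⁆ = ⁅y, x⁆ := by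
  rw [← lie_skew, neg_eq_iff_add_eq_zero, ← two_smul k, CharTwo.two_eq_zero, zero_smul]

namespace CharTwoTriple

variable {k L : Type*} [CommRing k] [LieRing L] [LieAlgebra k L] {e h f : L} (a b c : k)

theorem lie_e [CharP k 2] (hhe : ⁅h, e⁆ = e) (hef : ⁅e, f⁆ = h) :
    ⁅a • e + b • h + c • f, e⁆ = b • e + c • h := by
  rw [lie_comm_of_charTwo k e f] at hef
  simp only [add_lie, smul_lie, lie_self, hhe, hef]
  module

theorem lie_h [CharP k 2] (hhe : ⁅h, e⁆ = e) (hhf : ⁅h, f⁆ = f) :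
    ⁅a • e + b • h + c • f, h⁆ = a • e + c • f := by
  rw [lie_comm_of_charTwo k h e] at hhe
  rw [lie_comm_of_charTwo k h f] at hhf
  simp only [add_lie, smul_lie, lie_self, hhe, hhf]
  module

theorem lie_f (hhf : ⁅h, f⁆ = f) (hef : ⁅e, f⁆ = h) :
    ⁅a • e + b • h + c • f, f⁆ = a • h + b • f := by
  simp only [add_lie, smul_lie, lie_self, hhf, hef]
  module

theorem ad_sq_e [CharP k 2] (hhe : ⁅h, e⁆ = e) (hhf : ⁅h, f⁆ = f)
    (hef : ⁅e, f⁆ = h) :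
    (ad k L (a • e + b • h + c • f) ^ 2) e =
      c • (a • e + b • h + c • f) + b ^ 2 • e := by
  simp only [pow_two, Module.End.mul_apply, ad_apply, lie_e a b c hhe hef, lie_add, lie_smul,
    lie_h a b c hhe hhf]
  module

theorem ad_sq_h [CharP k 2] (hhe : ⁅h, e⁆ = e) (hhf : ⁅h, f⁆ = f)
    (hef : ⁅e, f⁆ = h) :
    (ad k L (a • e + b • h + c • f) ^ 2) h =
      b • (a • e + b • h + c • f) + b ^ 2 • h := by
  simp only [pow_two, Module.End.mul_apply, ad_apply, lie_h a b c hhe hhf, lie_add, lie_smul,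
    lie_e a b c hhe hef, lie_f a b c hhf hef]
  match_scalars <;> ring_nf
  simp only [CharTwo.two_eq_zero, mul_zero]

theorem ad_sq_f [CharP k 2] (hhe : ⁅h, e⁆ = e) (hhf : ⁅h, f⁆ = f)
    (hef : ⁅e, f⁆ = h) :
    (ad k L (a • e + b • h + c • f) ^ 2) f =
      a • (a • e + b • h + c • f) + b ^ 2 • f := by
  simp only [pow_two, Module.End.mul_apply, ad_apply, lie_f a b c hhf hef, lie_add, lie_smul,
    lie_h a b c hhe hhf]
  module

theorem ad_pow_three [CharP k 2] (B : Module.Basis (Fin 3) k L)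
    (hhe : ⁅B 1, B 0⁆ = B 0) (hhf : ⁅B 1, B 2⁆ = B 2) (hef : ⁅B 0, B 2⁆ = B 1) :
    ad k L (a • B 0 + b • B 1 + c • B 2) ^ 3 =
      b ^ 2 • ad k L (a • B 0 + b • B 1 + c • B 2) := by
  set x := a • B 0 + b • B 1 + c • B 2
  have cube (v : L) (r : k) (hv : (ad k L x ^ 2) v = r • x + b ^ 2 • v) :
      (ad k L x ^ 3) v = (b ^ 2 • ad k L x) v := by
    have hxx : ad k L x x = 0 := lie_self x
    rw [pow_succ', Module.End.mul_apply, hv, map_add, map_smul, map_smul, hxx, smul_zero, zero_add,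
      LinearMap.smul_apply]
  refine B.ext fun i => ?_
  fin_cases i
  exacts [cube _ _ (ad_sq_e a b c hhe hhf hef), cube _ _ (ad_sq_h a b c hhe hhf hef),
    cube _ _ (ad_sq_f a b c hhe hhf hef)]

end CharTwoTriple

open CharTwoTriple

/-- In the 3-dimensional Lie algebra `𝔰` over a field of characteristic 2
(basis `e = B 0`, `h = B 1`, `f = B 2` with `⁅h,e⁆ = e`, `⁅h,f⁆ = f`, `⁅e,f⁆ = h`),
an element `x = a•e + b•h + c•f` lies in the range of `(ad x)²` iff `b = 0`. -/
theorem stmt_3 (k : Type*) [Field k] [CharP k 2]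
    (L : Type*) [LieRing L] [LieAlgebra k L]
    (B : Module.Basis (Fin 3) k L)
    (hhe : ⁅B 1, B 0⁆ = B 0) (hhf : ⁅B 1, B 2⁆ = B 2) (hef : ⁅B 0, B 2⁆ = B 1)
    (a b c : k) (x : L) (hx : x = a • B 0 + b • B 1 + c • B 2) :
    x ∈ LinearMap.range ((LieAlgebra.ad k L x) ^ 2) ↔ b = 0 := by
  constructor
  · intro hmem
    rw [hx] at hmem
    have hbx := smul_eq_zero_of_mem_range_sq (ad_pow_three a b c B hhe hhf hef) (lie_self _) hmem
    have hb : b ^ 2 * b = 0 := by simpa using congrArg (fun v => B.repr v 1) hbx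
    simpa using hb
  · rintro rfl
    have hcx : c • x ∈ LinearMap.range (ad k L x ^ 2) :=
      ⟨B 0, by rw [hx, ad_sq_e a 0 c hhe hhf hef]; simp⟩
    have hax : a • x ∈ LinearMap.range (ad k L x ^ 2) :=
      ⟨B 2, by rw [hx, ad_sq_f a 0 c hhe hhf hef]; simp⟩
    by_cases ha : a = 0
    · by_cases hc : c = 0
      · simp [hx, ha, hc]
      · exact (Submodule.smul_mem_iff _ hc).1 hcx
    · exact (Submodule.smul_mem_iff _ ha).1 hax
end

section
/- Let k be a field of characteristic 2 and let L be the 3-dimensional Lie algebra over k with basis {e, h, f} and brackets ⁅h,e⁆ = e, ⁅h,f⁆ = f, ⁅e,f⁆ = h. Then the second Lie algebra cohomology of L with trivial coefficients in k vanishes: for every alternating bilinear map φ : L × L → k satisfying the 2-cocycle identity φ(⁅a,b⁆,c) + φ(⁅b,c⁆,a) + φ(⁅c,a⁆,b) = 0 for all a, b, c ∈ L, there exists a k-linear map ψ : L → k such that φ(a,b) = ψ(⁅a,b⁆) for all a, b ∈ L. -/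
/-!
Since `⁅𝔰, 𝔰⁆ = 𝔰`, the bracket induces an isomorphism `Λ²𝔰 ≅ 𝔰`: the brackets `⁅e,h⁆ = -e`,
`⁅e,f⁆ = h`, `⁅h,f⁆ = f` of the basis pairs are, up to sign, a basis again. An alternating form is
determined by its values on these pairs, so it equals `ψ ∘ ⁅·,·⁆` once `ψ` is prescribed on
`e, h, f` to match them.
-/

theorem LinearMap.IsAlt.ext_basis_of_lt {R M N ι : Type*} [CommSemiring R] [AddCommMonoid M]
    [Module R M] [AddCommGroup N] [Module R N] [LinearOrder ι] (b : Module.Basis ι R M)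
    {β β' : M →ₗ[R] M →ₗ[R] N} (hβ : β.IsAlt) (hβ' : β'.IsAlt)
    (h : ∀ i j, i < j → β (b i) (b j) = β' (b i) (b j)) : β = β' := by
  refine LinearMap.ext_basis b b fun i j => ?_
  rcases lt_trichotomy i j with hij | rfl | hji
  · exact h i j hij
  · rw [hβ, hβ']
  · rw [← hβ.neg, ← hβ'.neg, h j i hji]

theorem LieAlgebra.isAlt_ad_compr₂ {R L M : Type*} [CommRing R] [LieRing L] [LieAlgebra R L]
    [AddCommGroup M] [Module R M] (ψ : L →ₗ[R] M) :
    ((LieAlgebra.ad R L : L →ₗ[R] Module.End R L).compr₂ ψ).IsAlt := fun x => by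
  simp

theorem stmt_4_general (k : Type*) [Field k]
    (L : Type*) [LieRing L] [LieAlgebra k L]
    (B : Module.Basis (Fin 3) k L)
    (hhe : ⁅B 1, B 0⁆ = B 0) (hhf : ⁅B 1, B 2⁆ = B 2) (hef : ⁅B 0, B 2⁆ = B 1)
    (φ : L →ₗ[k] L →ₗ[k] k)
    (halt : ∀ a : L, φ a a = 0) :
    ∃ ψ : L →ₗ[k] k, ∀ a b : L, φ a b = ψ ⁅a, b⁆ := by
  let ψ : L →ₗ[k] k := B.constr k ![-φ (B 0) (B 1), φ (B 0) (B 2), φ (B 1) (B 2)]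
  have hψ (i : Fin 3) : ψ (B i) = ![-φ (B 0) (B 1), φ (B 0) (B 2), φ (B 1) (B 2)] i :=
    B.constr_basis k _ i
  have heh : ⁅B 0, B 1⁆ = -B 0 := by rw [← lie_skew, hhe]
  have hφ : φ = (LieAlgebra.ad k L : L →ₗ[k] Module.End k L).compr₂ ψ := by
    refine LinearMap.IsAlt.ext_basis_of_lt B halt (LieAlgebra.isAlt_ad_compr₂ ψ) fun i j hij => ?_
    fin_cases i <;> fin_cases j <;> first
      | exact absurd hij (by decide)
      | simp [heh, hhf, hef, hψ]
  exact ⟨ψ, fun a b => by rw [hφ]; rfl⟩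

/-- The second Lie algebra cohomology of the 3-dimensional simple Lie algebra
`𝔰` (basis `e = B 0`, `h = B 1`, `f = B 2`, brackets `⁅h,e⁆ = e`, `⁅h,f⁆ = f`, `⁅e,f⁆ = h`)
over a field of characteristic 2, with trivial coefficients, vanishes: every alternating
2-cocycle is a coboundary. -/
theorem stmt_4 (k : Type*) [Field k] [CharP k 2]
    (L : Type*) [LieRing L] [LieAlgebra k L]
    (B : Module.Basis (Fin 3) k L)
    (hhe : ⁅B 1, B 0⁆ = B 0) (hhf : ⁅B 1, B 2⁆ = B 2) (hef : ⁅B 0, B 2⁆ = B 1)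
    (φ : L →ₗ[k] L →ₗ[k] k)
    (halt : ∀ a : L, φ a a = 0)
    (hcoc : ∀ a b c : L, φ ⁅a, b⁆ c + φ ⁅b, c⁆ a + φ ⁅c, a⁆ b = 0) :
    ∃ ψ : L →ₗ[k] k, ∀ a b : L, φ a b = ψ ⁅a, b⁆ :=
  stmt_4_general k L B hhe hhf hef φ halt
end

section
/- Let k be an algebraically closed field of characteristic 2, let n ≥ 1 and let e ∈ sl_{n+1}(k) be a nilpotent matrix. Then there exists h ∈ sl_{n+1}(k) with ⁅h,e⁆ = e if and only if n ≢ 1 (mod 4) or e has a Jordan block of odd size, i.e., there exists an odd integer j ≥ 1 with rank(e^{j−1}) + rank(e^{j+1}) > 2·rank(e^j). -/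
/-!
A nilpotent `e` has a Jordan basis made of chains `v_B, e v_B, …, e ^ (s_B - 1) v_B`. The
endomorphism `h₀` acting on `e ^ i v_B` by `c_B + i` satisfies `⁅h₀, e⁆ = e`, and any other
solution differs from it by some `z` commuting with `e`, whose trace is `∑ s_B d_B`. In
characteristic 2, if some `s_B` is odd, then `c` can be chosen so that the trace is zero. If every
`s_B = 2 m_B` is even, every solution has trace `tr h₀ = ∑_B ∑_{i < 2 m_B} i = ∑ m_B = (n + 1) / 2`,
which vanishes iff `n ≡ 3 [MOD 4]`. Finally `rank (e ^ j) = ∑_B (s_B - j)`, so a block of size `j`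
is detected by the second difference of these ranks at `j`.
-/

open Module Submodule

universe u v

theorem Module.Basis.sumExtend_inl {K V ι : Type*} [DivisionRing K] [AddCommGroup V] [Module K V]
    {v : ι → V} (hs : LinearIndependent K v) (i : ι) : Basis.sumExtend hs (Sum.inl i) = v i := by
  simp only [Basis.sumExtend, Basis.reindex_apply, Basis.coe_extend]
  rfl

theorem Submodule.le_of_basis_mem {R M ι : Type*} [Semiring R] [AddCommMonoid M] [Module R M]
    {p U : Submodule R M} (b : Basis ι R p) (h : ∀ i, (b i : M) ∈ U) : p ≤ U := by
  rw [← p.map_subtype_top, ← b.span_eq, map_span_le]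
  rintro _ ⟨i, rfl⟩
  exact h i

theorem Submodule.eq_top_of_ker_le_of_range_le_map {R M N : Type*} [Ring R] [AddCommGroup M]
    [AddCommGroup N] [Module R M] [Module R N] {f : M →ₗ[R] N} {U : Submodule R M}
    (hker : LinearMap.ker f ≤ U) (hrange : LinearMap.range f ≤ U.map f) : U = ⊤ := by
  rw [← map_top, LinearMap.map_le_map_iff, sup_of_le_left hker] at hrange
  exact top_le_iff.mp hrange

theorem Sigma.fin_mk_eq_mk_iff {ι : Type*} {s : ι → ℕ} {B C : ι} {i : Fin (s B)}
    {j : Fin (s C)} : (⟨B, i⟩ : (B : ι) × Fin (s B)) = ⟨C, j⟩ ↔ B = C ∧ (i : ℕ) = j := by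
  constructor
  · intro h
    obtain ⟨rfl, h⟩ := Sigma.mk.inj_iff.mp h
    exact ⟨rfl, by rw [eq_of_heq h]⟩
  · rintro ⟨rfl, h⟩
    rw [Fin.ext h]

theorem CharTwo.sum_range_two_mul_natCast {R : Type*} [CommRing R] [CharP R 2] (m : ℕ) :
    ∑ i ∈ Finset.range (2 * m), (i : R) = m := by
  induction m with
  | zero => simp
  | succ m ih =>
    rw [Nat.mul_succ, Finset.sum_range_succ, Finset.sum_range_succ, ih]
    push_cast
    linear_combination (2 * m : R) * CharTwo.two_eq_zero (R := R)

theorem exists_eq_iff_two_mul_sum_tsub_lt {ι : Type*} [Fintype ι] (s : ι → ℕ) {j : ℕ}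
    (hj : 1 ≤ j) :
    (∃ B, s B = j) ↔
      2 * ∑ B, (s B - j) < ∑ B, (s B - (j - 1)) + ∑ B, (s B - (j + 1)) := by
  have hle : ∀ B ∈ Finset.univ, 2 * (s B - j) ≤ (s B - (j - 1)) + (s B - (j + 1)) :=
    fun B _ => by omega
  rw [Finset.mul_sum, ← Finset.sum_add_distrib, (Finset.sum_le_sum hle).lt_iff_ne, ne_eq,
    Finset.sum_eq_sum_iff_of_le hle]
  simp only [Finset.mem_univ, true_implies, not_forall]
  exact exists_congr fun B => by omega

open LieAlgebra.SpecialLinear in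
theorem LieAlgebra.SpecialLinear.exists_lie_eq_self_iff {n R : Type*} [Fintype n]
    [DecidableEq n] [CommRing R] (e : sl n R) :
    (∃ h : sl n R, ⁅h, e⁆ = e) ↔
      ∃ g : Module.End R (n → R),
        ⁅g, Matrix.toLin' e.val⁆ = Matrix.toLin' e.val ∧ LinearMap.trace R _ g = 0 := by
  have hmul : ∀ A B : Matrix n n R, Matrix.toLin' (A * B) = Matrix.toLin' A * Matrix.toLin' B :=
    Matrix.toLin'_mul
  constructor
  · rintro ⟨h, hh⟩
    refine ⟨Matrix.toLin' h.val, ?_, by rw [Matrix.trace_toLin'_eq]; exact h.2⟩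
    rw [Ring.lie_def, ← hmul, ← hmul, ← map_sub, ← sl_bracket, hh]
  · rintro ⟨g, hg, htr⟩
    refine ⟨⟨LinearMap.toMatrix' g, ?_⟩, Subtype.ext ?_⟩
    · show LinearMap.toMatrix' g ∈ LinearMap.ker (Matrix.traceLinearMap n R R)
      rw [LinearMap.mem_ker, Matrix.traceLinearMap_apply, ← Matrix.trace_toLin'_eq,
        Matrix.toLin'_toMatrix', htr]
    · apply Matrix.toLin'.injective
      rw [sl_bracket, map_sub, hmul, hmul, Matrix.toLin'_toMatrix', ← Ring.lie_def, hg]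

variable {k : Type u} {V : Type v} [Field k] [AddCommGroup V] [Module k V]

abbrev Module.End.restrictRange (f : Module.End k V) : Module.End k (LinearMap.range f) :=
  f.restrict fun x _ => LinearMap.mem_range_self f x

theorem Module.End.coe_restrictRange_pow_apply (f : Module.End k V) (i : ℕ)
    (x : LinearMap.range f) : ((f.restrictRange ^ i) x : V) = (f ^ i) x := by
  rw [Module.End.pow_restrict, LinearMap.restrict_apply]

structure JordanChains (f : Module.End k V) where
  ι : Type v
  [fintype : Fintype ι]
  size : ι → ℕ
  top : ι → V
  basis : Basis ((B : ι) × Fin (size B)) k V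
  size_pos : ∀ B, 0 < size B
  pow_size_apply_top : ∀ B, (f ^ size B) (top B) = 0
  basis_apply : ∀ B i, basis ⟨B, i⟩ = (f ^ (i : ℕ)) (top B)

attribute [instance] JordanChains.fintype

namespace JordanChains

variable {f : Module.End k V}

theorem nonempty_of_top_le_span [FiniteDimensional k V] {ι : Type v} [Fintype ι] {s : ι → ℕ}
    {v : ι → V} (hpos : ∀ B, 0 < s B) (hann : ∀ B, (f ^ s B) (v B) = 0)
    (hspan : ⊤ ≤ span k (Set.range fun x : (B : ι) × Fin (s B) => (f ^ (x.2 : ℕ)) (v x.1)))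
    (hcard : ∑ B, s B = finrank k V) : Nonempty (JordanChains f) :=
  ⟨{ ι, size := s, top := v
     basis := basisOfTopLeSpanOfCardEqFinrank _ hspan (by simpa using hcard)
     size_pos := hpos
     pow_size_apply_top := hann
     basis_apply := fun _ _ => by rw [coe_basisOfTopLeSpanOfCardEqFinrank] }⟩

/-- Each chain of `f` on `range f` is prolonged by a preimage of its top, and chains of length
one are added for a complement of the chain bottoms in `ker f`. These chains span `V` because
they span `ker f` and their image spans `range f`, and their total length is `finrank V` by
rank–nullity. -/
theorem nonempty_of_restrictRange [FiniteDimensional k V] (J : JordanChains f.restrictRange) :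
    Nonempty (JordanChains f) := by
  classical
  set W := LinearMap.range f
  have hbasis : ∀ B i, (J.basis ⟨B, i⟩ : V) = (f ^ (i : ℕ)) (J.top B) := by
    intro B i
    rw [J.basis_apply, Module.End.coe_restrictRange_pow_apply]
  have htop : ∀ B, (f ^ J.size B) (J.top B) = 0 := by
    intro B
    rw [← Module.End.coe_restrictRange_pow_apply, J.pow_size_apply_top, ZeroMemClass.coe_zero]
  choose u hu using fun B => (J.top B).2
  have hfu : ∀ B (i : ℕ), (f ^ (i + 1)) (u B) = (f ^ i) (J.top B) := by
    intro B i
    rw [pow_succ, Module.End.mul_apply, hu]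
  have hker : ∀ B, (f ^ J.size B) (u B) ∈ LinearMap.ker f := by
    intro B
    rw [LinearMap.mem_ker, ← Module.End.mul_apply, ← pow_succ', hfu, htop]
  have hlast : ∀ B, J.size B - 1 < J.size B := fun B => Nat.sub_lt (J.size_pos B) one_pos
  have hbot : (fun B => (f ^ J.size B) (u B)) =
      W.subtype ∘ J.basis ∘ fun B => ⟨B, ⟨J.size B - 1, hlast B⟩⟩ := by
    funext B
    simp only [Function.comp_apply, coe_subtype, hbasis]
    rw [← hfu, Nat.sub_add_cancel (J.size_pos B)]
  have hli : LinearIndependent k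
      fun B => (⟨(f ^ J.size B) (u B), hker B⟩ : LinearMap.ker f) := by
    apply LinearIndependent.of_comp (LinearMap.ker f).subtype
    change LinearIndependent k fun B => (f ^ J.size B) (u B)
    rw [hbot]
    exact (J.basis.linearIndependent.comp _ fun B C h => congrArg Sigma.fst h).map'
      W.subtype W.ker_subtype
  set E := Basis.sumExtend hli
  have : Finite (Basis.sumExtendIndex hli) := by
    have := Module.Finite.finite_basis E
    exact Finite.of_injective (Sum.inr : _ → J.ι ⊕ _) Sum.inr_injective
  have := Fintype.ofFinite (Basis.sumExtendIndex hli)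
  set s : J.ι ⊕ _ → ℕ := Sum.elim (fun B => J.size B + 1) fun _ => 1
  set v : J.ι ⊕ _ → V := Sum.elim u fun t => (E (Sum.inr t) : V)
  refine nonempty_of_top_le_span (s := s) (v := v) ?_ ?_ ?_ ?_
  · rintro (B | t) <;> simp [s]
  · rintro (B | t)
    · simp only [s, v, Sum.elim_inl]
      rw [hfu, htop]
    · simp [s, v]
  · refine (eq_top_of_ker_le_of_range_le_map (f := f) ?_ ?_).ge
    · refine le_of_basis_mem E ?_
      rintro (B | t)
      · rw [Basis.sumExtend_inl]
        exact subset_span ⟨⟨Sum.inl B, Fin.last _⟩, by simp [v]⟩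
      · exact subset_span ⟨⟨Sum.inr t, ⟨0, by simp [s]⟩⟩, by simp [v]⟩
    · refine le_of_basis_mem J.basis ?_
      rintro ⟨B, i⟩
      rw [hbasis, ← hfu, pow_succ', Module.End.mul_apply]
      exact mem_map_of_mem (subset_span ⟨⟨Sum.inl B, i.castSucc⟩, by simp [v]⟩)
  · have hW := finrank_eq_card_basis J.basis
    have hK := finrank_eq_card_basis E
    have hV := LinearMap.finrank_range_add_finrank_ker f
    simp only [Fintype.card_sigma, Fintype.card_fin, Fintype.card_sum] at hW hK
    simp only [s, Fintype.sum_sum_type, Sum.elim_inl, Sum.elim_inr, Finset.sum_add_distrib,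
      Finset.sum_const, Finset.card_univ, smul_eq_mul, mul_one]
    omega

theorem nonempty_of_isNilpotent [FiniteDimensional k V] (hf : IsNilpotent f) :
    Nonempty (JordanChains f) := by
  induction hN : finrank k V using Nat.strong_induction_on generalizing V with
  | _ N ih =>
  rcases subsingleton_or_nontrivial V with hV | hV
  · refine nonempty_of_top_le_span (ι := PEmpty) (s := PEmpty.elim) (v := PEmpty.elim)
      (fun B => B.elim) (fun B => B.elim) (le_of_eq (Subsingleton.elim _ _)) ?_
    simp [finrank_zero_of_subsingleton]
  · have hW : finrank k (LinearMap.range f) < N :=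
      hN ▸ Submodule.finrank_lt ((LinearMap.isUnit_iff_range_eq_top f).not.mp hf.not_isUnit)
    obtain ⟨n, hn⟩ := hf
    have hf' : IsNilpotent f.restrictRange := ⟨n, by ext x; simp [Module.End.pow_restrict, hn]⟩
    obtain ⟨J⟩ := ih _ hW hf' rfl
    exact nonempty_of_restrictRange J

variable (J : JordanChains f)

theorem pow_apply_basis (j : ℕ) (B : J.ι) (i : Fin (J.size B)) :
    (f ^ j) (J.basis ⟨B, i⟩) =
      if h : (i : ℕ) + j < J.size B then J.basis ⟨B, ⟨i + j, h⟩⟩ else 0 := by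
  rw [J.basis_apply, ← Module.End.mul_apply, ← pow_add, add_comm]
  split_ifs with h
  · rw [J.basis_apply]
  · rw [← Nat.sub_add_cancel (not_lt.mp h), pow_add, Module.End.mul_apply,
      J.pow_size_apply_top, map_zero]

theorem finrank_range_pow (j : ℕ) :
    finrank k (LinearMap.range (f ^ j)) = ∑ B, (J.size B - j) := by
  let shift : (B : J.ι) × Fin (J.size B - j) → (B : J.ι) × Fin (J.size B) :=
    fun x => ⟨x.1, ⟨x.2 + j, by omega⟩⟩
  have hshift : Function.Injective shift := by
    rintro ⟨B, t⟩ ⟨C, t'⟩ h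
    obtain ⟨rfl, h⟩ := Sigma.fin_mk_eq_mk_iff.mp h
    exact Sigma.fin_mk_eq_mk_iff (s := fun B => J.size B - j) |>.mpr ⟨rfl, by simpa using h⟩
  have hrange : LinearMap.range (f ^ j) = span k (Set.range (J.basis ∘ shift)) := by
    apply le_antisymm
    · rw [LinearMap.range_eq_map, ← J.basis.span_eq, map_span_le]
      rintro _ ⟨⟨B, i⟩, rfl⟩
      rw [pow_apply_basis]
      split_ifs with h
      · exact subset_span ⟨⟨B, ⟨i, by omega⟩⟩, rfl⟩
      · exact zero_mem _
    · rw [span_le]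
      rintro _ ⟨⟨B, t⟩, rfl⟩
      refine ⟨J.basis ⟨B, ⟨t, by omega⟩⟩, ?_⟩
      rw [pow_apply_basis, dif_pos (by simp; omega)]
      rfl
  rw [hrange, finrank_span_eq_card (J.basis.linearIndependent.comp shift hshift)]
  simp

noncomputable def grading (c : J.ι → k) : Module.End k V :=
  J.basis.constr k fun x => (c x.1 + (x.2 : ℕ)) • J.basis x

theorem grading_apply_basis (c : J.ι → k) (x : (B : J.ι) × Fin (J.size B)) :
    J.grading c (J.basis x) = (c x.1 + (x.2 : ℕ)) • J.basis x :=
  J.basis.constr_basis k _ x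

theorem lie_grading (c : J.ι → k) : ⁅J.grading c, f⁆ = f := by
  refine J.basis.ext fun ⟨B, i⟩ => ?_
  have hf := J.pow_apply_basis 1 B i
  rw [pow_one] at hf
  rw [Ring.lie_def, LinearMap.sub_apply, Module.End.mul_apply, Module.End.mul_apply,
    grading_apply_basis, map_smul, hf]
  split_ifs with h
  · rw [grading_apply_basis, ← sub_smul]
    simp
  · simp

theorem trace_grading (c : J.ι → k) :
    LinearMap.trace k V (J.grading c) =
      ∑ B, (J.size B * c B + ∑ i ∈ Finset.range (J.size B), (i : k)) := by
  classical
  rw [LinearMap.trace_eq_matrix_trace k J.basis, Matrix.trace, Fintype.sum_sigma]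
  refine Finset.sum_congr rfl fun B _ => ?_
  simp [LinearMap.toMatrix_apply, grading_apply_basis, Finset.sum_add_distrib,
    Fin.sum_univ_eq_sum_range (fun i => (i : k))]

theorem coord_pow_apply (B : J.ι) (i : Fin (J.size B)) (x : V) :
    J.basis.coord ⟨B, i⟩ ((f ^ (i : ℕ)) x) = J.basis.coord ⟨B, ⟨0, J.size_pos B⟩⟩ x := by
  suffices (J.basis.coord ⟨B, i⟩).comp (f ^ (i : ℕ)) = J.basis.coord ⟨B, ⟨0, J.size_pos B⟩⟩ from
    LinearMap.congr_fun this x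
  classical
  refine J.basis.ext fun ⟨C, l⟩ => ?_
  rw [LinearMap.comp_apply, pow_apply_basis]
  split_ifs with h
  · simp only [Basis.coord_apply, Basis.repr_self, Finsupp.single_apply, Sigma.fin_mk_eq_mk_iff]
    simp
  · simp only [map_zero, Basis.coord_apply, Basis.repr_self, Finsupp.single_apply,
      Sigma.fin_mk_eq_mk_iff]
    rw [if_neg]
    rintro ⟨rfl, hl⟩
    omega

theorem trace_eq_sum_of_commute {z : Module.End k V} (hz : Commute z f) :
    LinearMap.trace k V z =
      ∑ B, J.size B * J.basis.coord ⟨B, ⟨0, J.size_pos B⟩⟩ (z (J.top B)) := by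
  classical
  rw [LinearMap.trace_eq_matrix_trace k J.basis, Matrix.trace, Fintype.sum_sigma]
  refine Finset.sum_congr rfl fun B _ => ?_
  have hdiag : ∀ i : Fin (J.size B),
      Matrix.diag (LinearMap.toMatrix J.basis J.basis z) ⟨B, i⟩ =
        J.basis.coord ⟨B, ⟨0, J.size_pos B⟩⟩ (z (J.top B)) := by
    intro i
    rw [Matrix.diag_apply, LinearMap.toMatrix_apply, J.basis_apply, ← Module.End.mul_apply,
      ((hz.pow_right _).eq), Module.End.mul_apply, ← Basis.coord_apply, coord_pow_apply]
  rw [Finset.sum_congr rfl fun i _ => hdiag i, Finset.sum_const, Finset.card_univ,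
    Fintype.card_fin, nsmul_eq_mul]

theorem exists_lie_eq_self_and_trace_eq_zero_iff [CharP k 2] :
    (∃ h : Module.End k V, ⁅h, f⁆ = f ∧ LinearMap.trace k V h = 0) ↔
      ¬ finrank k V % 4 = 2 ∨ ∃ B, Odd (J.size B) := by
  by_cases hodd : ∃ B, Odd (J.size B)
  · simp only [hodd, or_true, iff_true]
    obtain ⟨B₀, hB₀⟩ := hodd
    classical
    refine ⟨J.grading (Pi.single B₀ (∑ B, ∑ i ∈ Finset.range (J.size B), (i : k))),
      J.lie_grading _, ?_⟩
    rw [trace_grading, Finset.sum_add_distrib, Finset.sum_eq_single B₀ (by simp_all) (by simp),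
      Pi.single_eq_same, natCast_eq_one_of_odd_of_two_eq_zero hB₀ CharTwo.two_eq_zero, one_mul,
      CharTwo.add_self_eq_zero]
  · simp only [hodd, or_false]
    push Not at hodd
    choose m hm using fun B => Nat.not_odd_iff_even.mp (hodd B)
    have hsize : ∀ B, J.size B = 2 * m B := fun B => by rw [hm, two_mul]
    have hdim : finrank k V = 2 * ∑ B, m B := by
      rw [finrank_eq_card_basis J.basis, Fintype.card_sigma, Finset.mul_sum]
      simp [hsize]
    have htrace : ∀ h : Module.End k V, ⁅h, f⁆ = f →
        LinearMap.trace k V h = ((∑ B, m B : ℕ) : k) := by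
      intro h hh
      have hz : Commute (h - J.grading 0) f := by
        have hg := J.lie_grading 0
        rw [Ring.lie_def] at hh hg
        rw [commute_iff_eq, ← sub_eq_zero]
        calc (h - J.grading 0) * f - f * (h - J.grading 0)
            = (h * f - f * h) - (J.grading 0 * f - f * J.grading 0) := by noncomm_ring
          _ = 0 := by rw [hh, hg, sub_self]
      have hz0 : LinearMap.trace k V (h - J.grading 0) = 0 := by
        rw [J.trace_eq_sum_of_commute hz]
        simp [hsize, CharTwo.two_eq_zero]
      rw [← sub_add_cancel h (J.grading 0), map_add, hz0, zero_add, trace_grading]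
      simp [hsize, CharTwo.sum_range_two_mul_natCast]
    have hhalf : ¬ finrank k V % 4 = 2 ↔ ((∑ B, m B : ℕ) : k) = 0 := by
      rw [CharP.cast_eq_zero_iff k 2]
      omega
    rw [hhalf]
    constructor
    · rintro ⟨h, hh, h0⟩
      rw [← htrace h hh, h0]
    · intro h0
      exact ⟨J.grading 0, J.lie_grading 0, by rw [htrace _ (J.lie_grading 0), h0]⟩

end JordanChains

open LieAlgebra.SpecialLinear in
theorem stmt_6_general (k : Type*) [Field k] [CharP k 2]
    (n : ℕ)
    (e : sl (Fin (n + 1)) k) (he : IsNilpotent e.val) :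
    (∃ h : sl (Fin (n + 1)) k, ⁅h, e⁆ = e) ↔
      (¬ n % 4 = 1 ∨ ∃ j : ℕ, 1 ≤ j ∧ Odd j ∧
        2 * (e.val ^ j).rank < (e.val ^ (j - 1)).rank + (e.val ^ (j + 1)).rank) := by
  obtain ⟨J⟩ := JordanChains.nonempty_of_isNilpotent (f := Matrix.toLin' e.val)
    (he.map Matrix.toLinAlgEquiv')
  have hrank : ∀ j, (e.val ^ j).rank = ∑ B, (J.size B - j) := fun j => by
    rw [← J.finrank_range_pow, ← Matrix.toLin'_pow]
    rfl
  simp only [hrank]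
  rw [exists_lie_eq_self_iff, J.exists_lie_eq_self_and_trace_eq_zero_iff, Module.finrank_fin_fun]
  refine or_congr (by omega) ⟨fun ⟨B, hB⟩ => ?_, fun ⟨j, hj, hodd, hlt⟩ => ?_⟩
  · exact ⟨J.size B, J.size_pos B, hB,
      (exists_eq_iff_two_mul_sum_tsub_lt _ (J.size_pos B)).mp ⟨B, rfl⟩⟩
  · obtain ⟨B, rfl⟩ := (exists_eq_iff_two_mul_sum_tsub_lt _ hj).mpr hlt
    exact ⟨B, hodd⟩

open LieAlgebra.SpecialLinear in
/-- For a nilpotent `e ∈ sl_{n+1}(k)`, `k` algebraically closed of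
characteristic 2, there exists `h ∈ sl_{n+1}(k)` with `⁅h,e⁆ = e` iff `n ≢ 1 (mod 4)`
or `e` has a Jordan block of odd size. -/
theorem stmt_6 (k : Type*) [Field k] [IsAlgClosed k] [CharP k 2]
    (n : ℕ) (hn : 1 ≤ n)
    (e : sl (Fin (n + 1)) k) (he : IsNilpotent e.val) :
    (∃ h : sl (Fin (n + 1)) k, ⁅h, e⁆ = e) ↔
      (¬ n % 4 = 1 ∨ ∃ j : ℕ, 1 ≤ j ∧ Odd j ∧
        2 * (e.val ^ j).rank < (e.val ^ (j - 1)).rank + (e.val ^ (j + 1)).rank) :=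
  stmt_6_general k n e he
end

section
/- Let k be an algebraically closed field of characteristic 2, let m ≥ 1 and let e be a nilpotent m×m matrix over k. Then there exist an m×m matrix h over k and a scalar c ∈ k such that ⁅h,e⁆ = e + c•1, where 1 is the identity matrix. (Equivalently, in the projective general linear Lie algebra pgl_m(k) = gl_m(k)/k·1, the image of every nilpotent element e admits an element h with ⁅h,e⁆ = e.) -/
/-!
One may take `c = 0`. The trace form `(X, Y) ↦ tr (X * Y)` is nondegenerate and
ad-invariant, so the image of `ad e` is the orthogonal complement of the centralizer of `e`. If `e`
is nilpotent and `F` commutes with `e`, then `F * e` is nilpotent, hence `tr (F * e) = 0`; thus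
`e` is orthogonal to its centralizer and lies in the image of `ad e`.
-/

open LinearMap LieAlgebra

namespace LieAlgebra

variable {K L : Type*} [Field K] [LieRing L] [LieAlgebra K L] {Φ : LinearMap.BilinForm K L}

theorem orthogonal_range_ad_eq_ker (hΦ : Φ.lieInvariant L) (hΦn : Φ.Nondegenerate) (x : L) :
    Φ.orthogonal (range (ad K L x)) = ker (ad K L x) := by
  ext y
  simp only [BilinForm.mem_orthogonal_iff, mem_range, forall_exists_index,
    forall_apply_eq_imp_iff, ad_apply, mem_ker, hΦ x _ y, neg_eq_zero]
  exact ⟨hΦn.2 _, fun h z => by rw [h, map_zero]⟩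

theorem range_ad_eq_orthogonal_ker [FiniteDimensional K L] (hΦ : Φ.lieInvariant L)
    (hΦn : Φ.Nondegenerate) (hΦr : Φ.IsRefl) (x : L) :
    range (ad K L x) = Φ.orthogonal (ker (ad K L x)) := by
  rw [← orthogonal_range_ad_eq_ker hΦ hΦn, BilinForm.orthogonal_orthogonal hΦn hΦr]

end LieAlgebra

namespace Matrix

variable {K n : Type*} [Field K] [Fintype n] [DecidableEq n]

def traceBilinForm : LinearMap.BilinForm K (Matrix n n K) :=
  (LinearMap.mul K (Matrix n n K)).compr₂ (traceLinearMap n K K)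

@[simp]
theorem traceBilinForm_apply (X Y : Matrix n n K) : traceBilinForm X Y = trace (X * Y) := rfl

theorem traceBilinForm_isRefl : (traceBilinForm : LinearMap.BilinForm K (Matrix n n K)).IsRefl :=
  fun X Y h => by rwa [traceBilinForm_apply, trace_mul_comm]

theorem traceBilinForm_nondegenerate :
    (traceBilinForm : LinearMap.BilinForm K (Matrix n n K)).Nondegenerate :=
  .ofSeparatingLeft fun X h => ext_iff_trace_mul_right.mpr fun Y => by simpa using h Y

attribute [local instance 100] LieRing.ofAssociativeRing

theorem traceBilinForm_lieInvariant :
    (traceBilinForm : LinearMap.BilinForm K (Matrix n n K)).lieInvariant (Matrix n n K) := by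
  intro X Y Z
  simp only [traceBilinForm_apply, Ring.lie_def, sub_mul, mul_sub, trace_sub, Matrix.mul_assoc]
  rw [trace_mul_cycle' X Y Z, trace_mul_comm Y (Z * X), Matrix.mul_assoc]
  ring

theorem mem_range_ad_self_of_isNilpotent {e : Matrix n n K} (he : IsNilpotent e) :
    e ∈ range (ad K (Matrix n n K) e) := by
  rw [range_ad_eq_orthogonal_ker traceBilinForm_lieInvariant traceBilinForm_nondegenerate
    traceBilinForm_isRefl, BilinForm.mem_orthogonal_iff]
  intro F hF
  have hcomm : Commute F e := (commute_iff_lie_eq.mpr hF).symm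
  exact (isNilpotent_trace_of_isNilpotent (hcomm.isNilpotent_mul_left he)).eq_zero

theorem exists_lie_eq_self_of_isNilpotent {e : Matrix n n K} (he : IsNilpotent e) :
    ∃ h : Matrix n n K, ⁅h, e⁆ = e := by
  obtain ⟨h, hh⟩ := mem_range_ad_self_of_isNilpotent he
  exact ⟨-h, by rwa [neg_lie, ← lie_skew, neg_neg]⟩

end Matrix

theorem stmt_7_general (k : Type*) [Field k]
    (m : ℕ)
    (e : Matrix (Fin m) (Fin m) k) (he : IsNilpotent e) :
    ∃ (h : Matrix (Fin m) (Fin m) k) (c : k),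
      ⁅h, e⁆ = e + c • (1 : Matrix (Fin m) (Fin m) k) := by
  obtain ⟨h, hh⟩ := Matrix.exists_lie_eq_self_of_isNilpotent he
  exact ⟨h, 0, by rw [zero_smul, add_zero, hh]⟩

/-- For every nilpotent `m×m` matrix `e` over an algebraically closed field
of characteristic 2 there exist a matrix `h` and a scalar `c` with `⁅h,e⁆ = e + c•1`;
equivalently, in `pgl_m(k)` every nilpotent element `e` admits `h` with `⁅h,e⁆ = e`. -/
theorem stmt_7 (k : Type*) [Field k] [IsAlgClosed k] [CharP k 2]
    (m : ℕ) (hm : 1 ≤ m)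
    (e : Matrix (Fin m) (Fin m) k) (he : IsNilpotent e) :
    ∃ (h : Matrix (Fin m) (Fin m) k) (c : k),
      ⁅h, e⁆ = e + c • (1 : Matrix (Fin m) (Fin m) k) :=
  stmt_7_general k m e he
end

section
/- Let k be an algebraically closed field of characteristic 2 and let e ∈ sl_3(k) be a nonzero nilpotent matrix. Then there exist h, f ∈ sl_3(k) such that e and f are linearly independent, ⁅e,f⁆ = 0, ⁅h,e⁆ = e and ⁅h,f⁆ = f (that is, e extends to a pgl₂-triple) if and only if e² = 0, i.e., e is not a regular nilpotent element of sl_3(k). -/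
/-!
If `e² ≠ 0`, then `e³ = 0` and `e` has a cyclic vector `v` (`v, ev, e²v` is a basis), so every
matrix commuting with `e` is a polynomial `a + b e + c e²` in it. In characteristic 2 the
relation `⁅h, e⁆ = e` gives `⁅h, e²⁆ = 2e² = 0`, hence `f = ⁅h, f⁆ = b e`, contradicting
independence.

If `e² = 0`, then `e` has rank one, `e = u φᵀ` with `φ ⬝ u = 0`. Choosing `ψ ⊥ u` independent
of `φ` and `χ` with `χ ⬝ u = 1`, the rank-one matrices `f = u ψᵀ` and `p = u χᵀ` satisfy
`⁅e, f⁆ = 0`, `⁅p, e⁆ = e`, `⁅p, f⁆ = f`, and `h = 1 + p` is traceless since `3 + 1 = 0`.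
-/

open Module

namespace Module.End

variable {K V : Type*} [Field K] [AddCommGroup V] [Module K V]

theorem linearIndependent_pow_apply {x : End K V} {v : V} {n : ℕ}
    (hn : (x ^ n) v ≠ 0) (hn' : (x ^ (n + 1)) v = 0) :
    LinearIndependent K (fun i : Fin (n + 1) => (x ^ (i : ℕ)) v) := by
  induction n generalizing v with
  | zero => simpa using hn
  | succ n ih =>
    have hcons : (fun i : Fin (n + 2) => (x ^ (i : ℕ)) v) =
        Fin.cons v (fun i : Fin (n + 1) => (x ^ (i : ℕ)) (x v)) := by
      ext i
      refine Fin.cases ?_ (fun i => ?_) i <;> simp [pow_succ, mul_apply]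
    rw [hcons, linearIndependent_finCons]
    refine ⟨ih (by rwa [← mul_apply, ← pow_succ]) (by rwa [← mul_apply, ← pow_succ]),
      fun hv => hn ?_⟩
    have hspan : Submodule.span K (Set.range fun i : Fin (n + 1) => (x ^ (i : ℕ)) (x v)) ≤
        LinearMap.ker (x ^ (n + 1)) := by
      rw [Submodule.span_le]
      rintro _ ⟨i, rfl⟩
      rw [SetLike.mem_coe, LinearMap.mem_ker, ← mul_apply, ← mul_apply, mul_assoc, ← pow_succ,
        ← pow_add, show n + 1 + (i + 1) = i + (n + 1 + 1) by omega, pow_add, mul_apply, hn',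
        map_zero]
    exact hspan hv

theorem exists_eq_sum_smul_pow_of_commute {R M : Type*} [CommRing R] [AddCommGroup M]
    [Module R M] {x y : End R M} {v : M} {n : ℕ}
    (hv : Submodule.span R (Set.range fun i : Fin n => (x ^ (i : ℕ)) v) = ⊤)
    (hxy : Commute x y) :
    ∃ c : Fin n → R, y = ∑ i, c i • x ^ (i : ℕ) := by
  obtain ⟨c, hc⟩ :=
    (Submodule.mem_span_range_iff_exists_fun R).mp (hv ▸ Submodule.mem_top (x := y v))
  refine ⟨c, LinearMap.ext_on_range hv fun j => ?_⟩
  calc y ((x ^ (j : ℕ)) v) = (x ^ (j : ℕ)) (y v) := by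
        rw [← mul_apply, ← mul_apply, (hxy.pow_left _).eq]
    _ = _ := by
        rw [← hc, map_sum, LinearMap.sum_apply]
        simp only [map_smul, LinearMap.smul_apply, ← mul_apply, ← pow_add, add_comm]

theorem exists_eq_sum_smul_pow_of_commute_of_pow_eq_zero [FiniteDimensional K V]
    {x y : End K V} {n : ℕ} (hV : finrank K V = n + 1) (hx : x ^ (n + 1) = 0)
    (hx' : x ^ n ≠ 0) (hxy : Commute x y) :
    ∃ c : Fin (n + 1) → K, y = ∑ i, c i • x ^ (i : ℕ) := by
  obtain ⟨v, hv⟩ : ∃ v, (x ^ n) v ≠ 0 := by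
    by_contra! h
    exact hx' (LinearMap.ext h)
  have hli := linearIndependent_pow_apply hv (by rw [hx, LinearMap.zero_apply])
  exact exists_eq_sum_smul_pow_of_commute
    (hli.span_eq_top_of_card_eq_finrank (by rw [Fintype.card_fin, hV])) hxy

end Module.End

theorem lie_pow_two_eq_zero_of_lie_eq_self {A : Type*} [Ring A] [CharP A 2] {h e : A}
    (he : ⁅h, e⁆ = e) : ⁅h, e ^ 2⁆ = 0 := by
  have hleibniz : ⁅h, e ^ 2⁆ = ⁅h, e⁆ * e + e * ⁅h, e⁆ := by
    simp only [Ring.lie_def]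
    noncomm_ring
  rw [hleibniz, he, CharTwo.add_self_eq_zero]

theorem one_add_lie {A : Type*} [Ring A] (p x : A) : ⁅1 + p, x⁆ = ⁅p, x⁆ := by
  rw [Ring.lie_def, Ring.lie_def, add_mul, mul_add, one_mul, mul_one]
  abel

namespace Matrix

variable {K : Type*} [Field K] {m n : Type*} [Fintype n]

theorem lie_vecMulVec_vecMulVec {R : Type*} [CommRing R] (u a b : n → R) :
    ⁅vecMulVec u a, vecMulVec u b⁆ = vecMulVec u ((u ⬝ᵥ a) • b - (u ⬝ᵥ b) • a) := by
  rw [Ring.lie_def, vecMulVec_mul_vecMulVec, vecMulVec_mul_vecMulVec, vecMulVec_sub,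
    dotProduct_comm a, dotProduct_comm b]

variable [DecidableEq n]

theorem pow_card_eq_zero_of_isNilpotent {R : Type*} [CommRing R] [IsDomain R]
    {M : Matrix n n R} (hM : IsNilpotent M) : M ^ Fintype.card n = 0 := by
  have hchar : M.charpoly = Polynomial.X ^ Fintype.card n :=
    sub_eq_zero.mp (isNilpotent_charpoly_sub_pow_of_isNilpotent hM).eq_zero
  simpa [hchar] using M.aeval_self_charpoly

theorem exists_eq_sum_smul_pow_of_commute_of_pow_eq_zero {d : ℕ} (hn : Fintype.card n = d + 1)
    {x y : Matrix n n K} (hx : x ^ (d + 1) = 0) (hx' : x ^ d ≠ 0) (hxy : Commute x y) :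
    ∃ c : Fin (d + 1) → K, y = ∑ i, c i • x ^ (i : ℕ) := by
  let φ := (toLinAlgEquiv' : Matrix n n K ≃ₐ[K] _)
  obtain ⟨c, hc⟩ := Module.End.exists_eq_sum_smul_pow_of_commute_of_pow_eq_zero
    (x := φ x) (y := φ y) (by rw [finrank_fintype_fun_eq_card, hn])
    (by rw [← map_pow, hx, map_zero]) (by rwa [← map_pow, ne_eq, map_eq_zero_iff _ φ.injective])
    (hxy.map φ)
  exact ⟨c, φ.injective (by simpa using hc)⟩

theorem exists_eq_smul_of_lie_eq_self [CharP K 2] {e f h : Matrix (Fin 3) (Fin 3) K}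
    (he3 : e ^ 3 = 0) (he2 : e ^ 2 ≠ 0) (hef : ⁅e, f⁆ = 0) (hhe : ⁅h, e⁆ = e)
    (hhf : ⁅h, f⁆ = f) :
    ∃ c : K, f = c • e := by
  obtain ⟨c, rfl⟩ := exists_eq_sum_smul_pow_of_commute_of_pow_eq_zero (Fintype.card_fin 3)
    he3 he2 (commute_iff_lie_eq.mpr hef)
  refine ⟨c 1, ?_⟩
  rw [← hhf, Fin.sum_univ_three]
  simp only [Fin.val_zero, Fin.val_one, Fin.val_two, pow_zero, pow_one]
  have hlin : ⁅h, c 0 • 1 + c 1 • e + c 2 • e ^ 2⁆ = c 1 • ⁅h, e⁆ + c 2 • ⁅h, e ^ 2⁆ := by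
    simp only [Ring.lie_def, mul_add, add_mul, mul_smul_comm, smul_mul_assoc, mul_one, one_mul,
      smul_sub]
    abel
  rw [hlin, hhe, lie_pow_two_eq_zero_of_lie_eq_self hhe, smul_zero, add_zero]

theorem rank_le_one_of_sq_eq_zero {e : Matrix n n K} (hn : Fintype.card n ≤ 3)
    (he : e ^ 2 = 0) : e.rank ≤ 1 := by
  have := rank_add_rank_le_card_of_mul_eq_zero (sq e ▸ he)
  omega

theorem exists_eq_vecMulVec_of_rank_le_one [Finite m] {A : Matrix m n K} (hA : A.rank ≤ 1) :
    ∃ u v, A = vecMulVec u v := by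
  obtain ⟨w, hw⟩ := finrank_le_one_iff.mp hA
  choose c hc using fun j => hw ⟨A.mulVecLin (Pi.single j 1), LinearMap.mem_range_self _ _⟩
  refine ⟨w, c, ?_⟩
  ext i j
  simpa [mulVec_single_one, vecMulVec_apply, mul_comm] using
    (congrArg (fun z : LinearMap.range A.mulVecLin => (z : m → K) i) (hc j)).symm

theorem exists_dotProduct_eq_zero_linearIndependent {u φ : n → K} (hu : u ≠ 0)
    (hn : 2 < Fintype.card n) (hφ : φ ≠ 0) (huφ : u ⬝ᵥ φ = 0) :
    ∃ ψ, u ⬝ᵥ ψ = 0 ∧ LinearIndependent K ![φ, ψ] := by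
  set ℓ := dotProductEquiv K n u
  have hℓ : ℓ ≠ 0 := by simpa [ℓ] using hu
  have hker : 1 < finrank K (LinearMap.ker ℓ) := by
    have := Module.Dual.finrank_ker_add_one_of_ne_zero hℓ
    rw [finrank_fintype_fun_eq_card] at this
    omega
  obtain ⟨ψ, hψ⟩ := exists_linearIndependent_pair_of_one_lt_finrank hker
    (x := ⟨φ, huφ⟩) (fun h => hφ (congrArg Subtype.val h))
  exact ⟨ψ, ψ.2, LinearIndependent.pair_iff.mpr fun s t hst =>
    LinearIndependent.pair_iff.mp hψ s t (Subtype.ext hst)⟩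

theorem exists_dotProduct_eq_one {u : n → K} (hu : u ≠ 0) : ∃ χ, u ⬝ᵥ χ = 1 := by
  obtain ⟨i, hi⟩ := Function.ne_iff.mp hu
  exact ⟨Pi.single i (u i)⁻¹, by rw [dotProduct_single, mul_inv_cancel₀ hi]⟩

theorem exists_pgl2Triple_of_rank_le_one {e : Matrix n n K} (hn : 2 < Fintype.card n)
    (he : e ≠ 0) (he2 : e ^ 2 = 0) (hrank : e.rank ≤ 1) :
    ∃ p f : Matrix n n K, p.trace = 1 ∧ f.trace = 0 ∧ LinearIndependent K ![e, f] ∧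
      ⁅e, f⁆ = 0 ∧ ⁅p, e⁆ = e ∧ ⁅p, f⁆ = f := by
  obtain ⟨u, φ, rfl⟩ := exists_eq_vecMulVec_of_rank_le_one hrank
  obtain ⟨hu, hφ⟩ : u ≠ 0 ∧ φ ≠ 0 := by simpa [not_or] using he
  have huφ : u ⬝ᵥ φ = 0 := by
    rw [sq, vecMulVec_mul_vecMulVec, vecMulVec_eq_zero, smul_eq_zero, dotProduct_comm] at he2
    tauto
  obtain ⟨ψ, huψ, hφψ⟩ := exists_dotProduct_eq_zero_linearIndependent hu hn hφ huφ
  obtain ⟨χ, huχ⟩ := exists_dotProduct_eq_one hu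
  refine ⟨vecMulVec u χ, vecMulVec u ψ, by rw [trace_vecMulVec, huχ],
    by rw [trace_vecMulVec, huψ], ?_, ?_, ?_, ?_⟩
  · refine LinearIndependent.pair_iff.mpr fun s t hst => LinearIndependent.pair_iff.mp hφψ s t ?_
    rw [← vecMulVec_smul, ← vecMulVec_smul, ← vecMulVec_add, vecMulVec_eq_zero] at hst
    exact hst.resolve_left hu
  · rw [lie_vecMulVec_vecMulVec, huφ, huψ, zero_smul, zero_smul, sub_zero, vecMulVec_zero]
  · rw [lie_vecMulVec_vecMulVec, huχ, huφ, one_smul, zero_smul, sub_zero]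
  · rw [lie_vecMulVec_vecMulVec, huχ, huψ, one_smul, zero_smul, sub_zero]

end Matrix

open LieAlgebra.SpecialLinear in
theorem stmt_11_general (k : Type*) [Field k] [CharP k 2]
    (e : sl (Fin 3) k) (hne : e ≠ 0) (he : IsNilpotent e.val) :
    (∃ h f : sl (Fin 3) k, LinearIndependent k ![e, f] ∧
      ⁅e, f⁆ = 0 ∧ ⁅h, e⁆ = e ∧ ⁅h, f⁆ = f) ↔ e.val ^ 2 = 0 := by
  constructor
  · rintro ⟨h, f, hli, hef, hhe, hhf⟩
    by_contra he2
    obtain ⟨c, hc⟩ := Matrix.exists_eq_smul_of_lie_eq_self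
      (Matrix.pow_card_eq_zero_of_isNilpotent he) he2
      (congrArg Subtype.val hef) (congrArg Subtype.val hhe) (congrArg Subtype.val hhf)
    exact (LinearIndependent.pair_iff' hne).mp hli c (Subtype.ext hc.symm)
  · intro he2
    obtain ⟨p, f, hp, hf, hli, hef, hpe, hpf⟩ := Matrix.exists_pgl2Triple_of_rank_le_one
      (by simp) (fun h => hne (Subtype.ext h)) he2
      (Matrix.rank_le_one_of_sq_eq_zero (by simp) he2)
    have hh : (1 + p).trace = 0 := by
      rw [Matrix.trace_add, Matrix.trace_one, hp, Fintype.card_fin]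
      exact_mod_cast (CharP.cast_eq_zero_iff k 2 4).mpr (by norm_num)
    refine ⟨⟨1 + p, hh⟩, ⟨f, hf⟩, ?_, Subtype.ext hef, Subtype.ext ((one_add_lie _ _).trans hpe),
      Subtype.ext ((one_add_lie _ _).trans hpf)⟩
    exact LinearIndependent.pair_iff.mpr fun s t hst =>
      LinearIndependent.pair_iff.mp hli s t (congrArg Subtype.val hst)

open LieAlgebra.SpecialLinear in
/-- A nonzero nilpotent `e ∈ sl_3(k)`, `k` algebraically closed of
characteristic 2, extends to a `pgl₂`-triple (`e, f` linearly independent, `⁅e,f⁆ = 0`,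
`⁅h,e⁆ = e`, `⁅h,f⁆ = f`) iff `e² = 0`, i.e. `e` is not regular. -/
theorem stmt_11 (k : Type*) [Field k] [IsAlgClosed k] [CharP k 2]
    (e : sl (Fin 3) k) (hne : e ≠ 0) (he : IsNilpotent e.val) :
    (∃ h f : sl (Fin 3) k, LinearIndependent k ![e, f] ∧
      ⁅e, f⁆ = 0 ∧ ⁅h, e⁆ = e ∧ ⁅h, f⁆ = f) ↔ e.val ^ 2 = 0 :=
  stmt_11_general k e hne he
end

section
/- Let k be an algebraically closed field of characteristic 2, let m ≥ 2 and let e ∈ sl_m(k) be a nonzero nilpotent matrix. Then there exists f ∈ sl_m(k) such that h := ⁅e,f⁆ is nonzero and ⁅h,e⁆ = 0 = ⁅h,f⁆; that is, e extends to an sl₂-triple (in characteristic 2 the span of e, f, h is a 3-dimensional Heisenberg algebra isomorphic to sl₂(k)). -/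
open Matrix Module

private lemma aux_comm {R : Type*} [Ring R] {e f c : R} (h : e * f - f * e = c)
    (hc : e * c = c * e) :
    ∀ n : ℕ, f * e ^ (n + 1) = e ^ (n + 1) * f - (n + 1) • (e ^ n * c) := by
  have hfe : f * e = e * f - c := by rw [← h, sub_sub_cancel]
  intro n
  induction n with
  | zero => simpa using hfe
  | succ n ih =>
    have h1 : f * e ^ (n + 2) = (f * e ^ (n + 1)) * e := by
      rw [pow_succ, mul_assoc]
    rw [h1, ih, sub_mul, smul_mul_assoc, mul_assoc, hfe, mul_sub, mul_assoc, ← hc,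
      ← mul_assoc (e ^ n) e c, ← pow_succ, ← mul_assoc (e ^ (n+1)) e f, ← pow_succ,
      succ_nsmul (e ^ (n + 1) * c) (n + 1)]
    abel

private lemma trace_eq_zero_of_sq_zero {k : Type*} [Field k] {m : ℕ}
    {X : Matrix (Fin m) (Fin m) k} (h : X * X = 0) : X.trace = 0 := by
  have hn : IsNilpotent X := ⟨2, by rwa [pow_two]⟩
  exact (Matrix.isNilpotent_trace_of_isNilpotent hn).eq_zero

section VecLemmas

variable {k : Type*} [Field k] {m : ℕ}

private lemma L1 (A : Matrix (Fin m) (Fin m) k) (w c : Fin m → k) :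
    A * vecMulVec w c = vecMulVec (A.mulVec w) c := by
  ext i j
  simp [Matrix.mul_apply, vecMulVec_apply, Matrix.mulVec, dotProduct, Finset.sum_mul, mul_assoc]

private lemma L2 (A : Matrix (Fin m) (Fin m) k) (w c : Fin m → k) :
    vecMulVec w c * A = vecMulVec w (Matrix.vecMul c A) := by
  ext i j
  simp [Matrix.mul_apply, vecMulVec_apply, Matrix.vecMul, dotProduct, Finset.mul_sum, mul_assoc]

private lemma L3 (a b x y : Fin m → k) :
    vecMulVec a b * vecMulVec x y = (b ⬝ᵥ x) • vecMulVec a y := by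
  ext i j
  simp only [Matrix.mul_apply, vecMulVec_apply, Matrix.smul_apply, dotProduct, smul_eq_mul,
    Finset.sum_mul]
  exact Finset.sum_congr rfl fun l _ => by ring

private lemma L4 (a b x : Fin m → k) :
    (vecMulVec a b).mulVec x = (b ⬝ᵥ x) • a := by
  ext i
  simp only [Matrix.mulVec, dotProduct, vecMulVec_apply, Pi.smul_apply, smul_eq_mul,
    Finset.sum_mul]
  exact Finset.sum_congr rfl fun l _ => by ring

private lemma Ltr (a b : Fin m → k) : (vecMulVec a b).trace = b ⬝ᵥ a := by
  simp [Matrix.trace, Matrix.diag, vecMulVec_apply, dotProduct, mul_comm]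

private lemma Ldot (φ : (Fin m → k) →ₗ[k] k) (x : Fin m → k) :
    (fun j => φ (Pi.single j 1)) ⬝ᵥ x = φ x := by
  have hx : x = ∑ j : Fin m, x j • (Pi.single j (1 : k) : Fin m → k) := by
    ext i
    simp [Pi.single_apply]
  conv_rhs => rw [hx]
  rw [map_sum]
  simp [dotProduct, mul_comm]

private lemma trace_matrix_of_dual (φ : Matrix (Fin m) (Fin m) k →ₗ[k] k)
    (z : Matrix (Fin m) (Fin m) k) :
    ((Matrix.of fun i j => φ (Matrix.single j i 1)) * z).trace = φ z := by
  have hstd : ∀ p q : Fin m, φ (Matrix.single p q (z p q))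
      = z p q * φ (Matrix.single p q 1) := by
    intro p q
    rw [← smul_eq_mul, ← _root_.map_smul, Matrix.smul_single, smul_eq_mul, mul_one]
  conv_rhs => rw [Matrix.matrix_eq_sum_single z]
  rw [map_sum]
  simp only [map_sum, hstd]
  rw [Matrix.trace]
  simp only [Matrix.diag, Matrix.mul_apply, Matrix.of_apply]
  rw [Finset.sum_comm]
  exact Finset.sum_congr rfl fun l _ => Finset.sum_congr rfl fun i _ => mul_comm _ _

private lemma exists_preimage (E x : Matrix (Fin m) (Fin m) k)
    (hx : ∀ z : Matrix (Fin m) (Fin m) k, E * z = z * E → (x * z).trace = 0) :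
    ∃ y, E * y - y * E = x := by
  classical
  let ad : Matrix (Fin m) (Fin m) k →ₗ[k] Matrix (Fin m) (Fin m) k :=
    LinearMap.mulLeft k E - LinearMap.mulRight k E
  have had : ∀ y : Matrix (Fin m) (Fin m) k, ad y = E * y - y * E := fun y => rfl
  set K := LinearMap.ker ad with hK
  have hKmem : ∀ z : Matrix (Fin m) (Fin m) k, z ∈ K ↔ E * z = z * E := by
    intro z
    rw [hK, LinearMap.mem_ker, had, sub_eq_zero]
  let T : Matrix (Fin m) (Fin m) k →ₗ[k] Module.Dual k K :=
    { toFun := fun a =>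
        { toFun := fun z => (a * (z : Matrix (Fin m) (Fin m) k)).trace
          map_add' := by intro y z; simp [mul_add, Matrix.trace_add]
          map_smul' := by intro r z; simp [Matrix.mul_smul, Matrix.trace_smul] }
      map_add' := by
        intro a b
        ext z
        simp [add_mul, Matrix.trace_add]
      map_smul' := by
        intro a b
        ext z
        simp [smul_mul_assoc, Matrix.trace_smul] }
  have hT : ∀ (a : Matrix (Fin m) (Fin m) k) (z : K),
      T a z = (a * (z : Matrix (Fin m) (Fin m) k)).trace := fun a z => rfl
  have hTsurj : Function.Surjective T := by
    intro ψ
    obtain ⟨φ, hφ⟩ := LinearMap.exists_extend ψ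
    refine ⟨Matrix.of fun i j => φ (Matrix.single j i 1), ?_⟩
    ext z
    rw [hT, trace_matrix_of_dual]
    exact DFunLike.congr_fun hφ z
  have hle : LinearMap.range ad ≤ LinearMap.ker T := by
    rintro _ ⟨y, rfl⟩
    rw [LinearMap.mem_ker]
    ext z
    rw [hT, had]
    have hz : E * (z : Matrix (Fin m) (Fin m) k) = (z : Matrix (Fin m) (Fin m) k) * E :=
      (hKmem _).1 z.2
    calc ((E * y - y * E) * (z : Matrix (Fin m) (Fin m) k)).trace
        = (E * (y * (z : Matrix (Fin m) (Fin m) k))).trace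
            - (y * (E * (z : Matrix (Fin m) (Fin m) k))).trace := by
          rw [sub_mul, Matrix.trace_sub, mul_assoc, mul_assoc, hz]
      _ = 0 := by rw [Matrix.trace_mul_comm, mul_assoc, hz, sub_self]
  have e1 := LinearMap.finrank_range_add_finrank_ker ad
  have e2 := LinearMap.finrank_range_add_finrank_ker T
  rw [← hK] at e1
  rw [LinearMap.range_eq_top.mpr hTsurj, finrank_top, Subspace.dual_finrank_eq] at e2
  have heq : LinearMap.range ad = LinearMap.ker T :=
    Submodule.eq_of_le_of_finrank_eq hle (by omega)
  have hxmem : x ∈ LinearMap.ker T := by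
    rw [LinearMap.mem_ker]
    ext z
    rw [hT]
    exact hx (z : Matrix (Fin m) (Fin m) k) ((hKmem _).1 z.2)
  rw [← heq] at hxmem
  obtain ⟨y, hy⟩ := hxmem
  exact ⟨y, by rw [← had, hy]⟩

end VecLemmas

private lemma key {k : Type*} [Field k] [CharP k 2] {m : ℕ} (E : Matrix (Fin m) (Fin m) k)
    (hE : E ≠ 0) (hn : IsNilpotent E) :
    ∃ F : Matrix (Fin m) (Fin m) k, F.trace = 0 ∧ E * F - F * E ≠ 0 ∧
      E * (E * F - F * E) = (E * F - F * E) * E ∧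
      F * (E * F - F * E) = (E * F - F * E) * F := by
  classical
  have h2k : (2 : k) = 0 := by
    have := CharP.cast_eq_zero k 2
    exact_mod_cast this
  have hchar : ∀ X : Matrix (Fin m) (Fin m) k, X + X = 0 := by
    intro X
    rw [← two_smul k X, h2k, zero_smul]
  by_cases h2 : E * E = 0
  · -- the case e² = 0 : rank-one construction
    have hw : ∃ w : Fin m → k, E.mulVec w ≠ 0 := by
      by_contra hcon
      push_neg at hcon
      apply hE
      ext i j
      have h1 := congrFun (hcon (Pi.single j 1)) i
      rw [Matrix.mulVec_single] at h1
      simpa using h1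
    obtain ⟨w, hu⟩ := hw
    set u := E.mulVec w with hudef
    have hw0 : w ≠ 0 := by
      intro h
      apply hu
      rw [hudef, h, Matrix.mulVec_zero]
    have huE : E.mulVec u = 0 := by
      rw [hudef, Matrix.mulVec_mulVec, h2, Matrix.zero_mulVec]
    have husp : u ∉ Submodule.span k {w} := by
      intro hmem
      rw [Submodule.mem_span_singleton] at hmem
      obtain ⟨a, ha⟩ := hmem
      have h0 : a • u = 0 := by
        rw [hudef, ← Matrix.mulVec_smul, ha, huE]
      rcases smul_eq_zero.mp h0 with h | h
      · exact hu (by rw [← ha, h, zero_smul])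
      · exact hu h
    have huq : (Submodule.Quotient.mk u : (Fin m → k) ⧸ Submodule.span k {w}) ≠ 0 := by
      rwa [ne_eq, Submodule.Quotient.mk_eq_zero]
    obtain ⟨g, hg⟩ := LinearMap.exists_extend
      ((LinearEquiv.coord k ((Fin m → k) ⧸ Submodule.span k {w})
        (Submodule.Quotient.mk u) huq).toLinearMap)
    set φ : (Fin m → k) →ₗ[k] k := g.comp (Submodule.span k {w}).mkQ with hφdef
    have hgu : g (Submodule.Quotient.mk u) = 1 := by
      have h1 := DFunLike.congr_fun hg
        (⟨Submodule.Quotient.mk u, Submodule.mem_span_singleton_self _⟩ :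
          (Submodule.span k {(Submodule.Quotient.mk u :
            (Fin m → k) ⧸ Submodule.span k {w})}))
      have h2' := LinearEquiv.coord_self k ((Fin m → k) ⧸ Submodule.span k {w})
        (Submodule.Quotient.mk u) huq
      simpa [h2'] using h1
    have hφu : φ u = 1 := by
      rw [hφdef]
      simpa [Submodule.mkQ_apply] using hgu
    have hφw : φ w = 0 := by
      rw [hφdef]
      simp only [LinearMap.comp_apply, Submodule.mkQ_apply]
      rw [show (Submodule.Quotient.mk w : (Fin m → k) ⧸ Submodule.span k {w}) = 0 from
        (Submodule.Quotient.mk_eq_zero _).mpr (Submodule.mem_span_singleton_self w), map_zero]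
    set c : Fin m → k := fun j => φ (Pi.single j 1) with hcdef
    have hcd : ∀ x : Fin m → k, c ⬝ᵥ x = φ x := fun x => Ldot φ x
    have hcu : c ⬝ᵥ u = 1 := by rw [hcd, hφu]
    have hcw : c ⬝ᵥ w = 0 := by rw [hcd, hφw]
    set c' := Matrix.vecMul c E with hc'def
    have hc'w : c' ⬝ᵥ w = 1 := by
      rw [hc'def, ← Matrix.dotProduct_mulVec, ← hudef, hcu]
    have hc'E : Matrix.vecMul c' E = 0 := by
      rw [hc'def, Matrix.vecMul_vecMul, h2, Matrix.vecMul_zero]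
    have hvmw0 : ∀ b : Fin m → k, vecMulVec (0 : Fin m → k) b = 0 := by
      intro b; ext i j; simp [vecMulVec_apply]
    have hvw0 : ∀ a : Fin m → k, vecMulVec a (0 : Fin m → k) = 0 := by
      intro a; ext i j; simp [vecMulVec_apply]
    set H := E * vecMulVec w c - vecMulVec w c * E with hHdef
    have hH : H = vecMulVec u c - vecMulVec w c' := by
      rw [hHdef, L1, L2, ← hudef, ← hc'def]
    have hHw : H.mulVec w = -w := by
      rw [hH, Matrix.sub_mulVec, L4, L4, hcw, hc'w, zero_smul, one_smul, zero_sub]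
    have hHne : H ≠ 0 := by
      intro h0
      rw [h0, Matrix.zero_mulVec] at hHw
      exact hw0 (by rw [← neg_neg w, ← hHw, neg_zero])
    have hEH : E * H = -vecMulVec u c' := by
      rw [hH, mul_sub, L1, L1, huE, ← hudef, hvmw0, zero_sub]
    have hHE : H * E = vecMulVec u c' := by
      rw [hH, sub_mul, L2, L2, hc'E, hvw0, sub_zero, ← hc'def]
    have hcomm1 : E * H = H * E := by
      rw [hEH, hHE, neg_eq_iff_add_eq_zero]
      exact hchar _
    have hHF : H * vecMulVec w c = -vecMulVec w c := by
      rw [hH, sub_mul, L3, L3, hcw, hc'w, zero_smul, one_smul, zero_sub]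
    have hFH : vecMulVec w c * H = vecMulVec w c := by
      rw [hH, mul_sub, L3, L3, hcu, hcw, one_smul, zero_smul, sub_zero]
    have hcomm2 : vecMulVec w c * H = H * vecMulVec w c := by
      rw [hFH, hHF, eq_comm, neg_eq_iff_add_eq_zero]
      exact hchar _
    refine ⟨vecMulVec w c, by rw [Ltr]; exact hcw, ?_, ?_, ?_⟩
    · rw [← hHdef]; exact hHne
    · rw [← hHdef]; exact hcomm1
    · rw [← hHdef]; exact hcomm2
  · -- the case e² ≠ 0 : take h = e^(r-1)
    obtain ⟨N, hN⟩ := hn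
    have hex : ∃ n, E ^ n = 0 := ⟨N, hN⟩
    set r := Nat.find hex with hrdef
    have hr0 : E ^ r = 0 := Nat.find_spec hex
    have hrmin : ∀ j, j < r → E ^ j ≠ 0 := fun j hj => Nat.find_min hex hj
    have hE2 : E ^ 2 ≠ 0 := by rwa [pow_two]
    have h3r : 3 ≤ r := by
      by_contra hlt
      push_neg at hlt
      apply hE2
      have h' : E ^ 2 = E ^ r * E ^ (2 - r) := by
        rw [← pow_add]
        congr 1
        omega
      rw [h', hr0, zero_mul]
    set s := r - 1 with hsdef
    have hs2 : 2 ≤ s := by omega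
    have hEs : E ^ s ≠ 0 := hrmin s (by omega)
    have hpow : ∀ t, s + 1 ≤ t → E ^ t = 0 := by
      intro t ht
      have h' : E ^ t = E ^ r * E ^ (t - r) := by
        rw [← pow_add]
        congr 1
        omega
      rw [h', hr0, zero_mul]
    have hcEs : E * E ^ s = E ^ s * E := by rw [← pow_succ, ← pow_succ']
    have hs1 : ∀ z : Matrix (Fin m) (Fin m) k, E * z = z * E → (E ^ s * z).trace = 0 := by
      intro z hz
      apply trace_eq_zero_of_sq_zero
      have hco : Commute (E ^ s) z := Commute.pow_left hz s
      calc E ^ s * z * (E ^ s * z) = E ^ s * (z * E ^ s) * z := by noncomm_ring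
        _ = E ^ s * (E ^ s * z) * z := by rw [← hco.eq]
        _ = E ^ s * E ^ s * (z * z) := by noncomm_ring
        _ = 0 := by
            rw [← pow_add, hpow (s + s) (by omega), zero_mul]
    obtain ⟨f₀, hf₀⟩ := exists_preimage E (E ^ s) hs1
    have hmain : ∀ F : Matrix (Fin m) (Fin m) k, E * F - F * E = E ^ s → F.trace = 0 →
        F.trace = 0 ∧ E * F - F * E ≠ 0 ∧
          E * (E * F - F * E) = (E * F - F * E) * E ∧
          F * (E * F - F * E) = (E * F - F * E) * F := by
      intro F hF htrF
      refine ⟨htrF, by rw [hF]; exact hEs, by rw [hF]; exact hcEs, ?_⟩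
      rw [hF]
      have haux := aux_comm hF hcEs (s - 1)
      have hz : E ^ (s - 1) * E ^ s = 0 := by
        rw [← pow_add]
        exact hpow _ (by omega)
      rw [hz, smul_zero, sub_zero, show s - 1 + 1 = s by omega] at haux
      rw [haux]
    by_cases hzt : ∃ z : Matrix (Fin m) (Fin m) k, E * z = z * E ∧ z.trace ≠ 0
    · obtain ⟨z, hz1, hz2⟩ := hzt
      refine ⟨f₀ - (f₀.trace / z.trace) • z, hmain _ ?_ ?_⟩
      · have hsub : E * (f₀ - (f₀.trace / z.trace) • z) - (f₀ - (f₀.trace / z.trace) • z) * E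
            = (E * f₀ - f₀ * E) - (f₀.trace / z.trace) • (E * z - z * E) := by
          rw [mul_sub, sub_mul, Matrix.mul_smul, Matrix.smul_mul, smul_sub]
          abel
        rw [hsub, sub_eq_zero_of_eq hz1, smul_zero, sub_zero, hf₀]
      · rw [Matrix.trace_sub, Matrix.trace_smul, smul_eq_mul, div_mul_cancel₀ _ hz2, sub_self]
    · push_neg at hzt
      have h1mem : ∀ z : Matrix (Fin m) (Fin m) k, E * z = z * E →
          ((1 : Matrix (Fin m) (Fin m) k) * z).trace = 0 := by
        intro z hz
        rw [one_mul]
        exact hzt z hz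
      obtain ⟨g, hg⟩ := exists_preimage E 1 h1mem
      have hgE : g * E ^ s = E ^ s * g - s • E ^ (s - 1) := by
        have haux := aux_comm hg (by rw [mul_one, one_mul]) (s - 1)
        rw [mul_one, show s - 1 + 1 = s by omega] at haux
        exact haux
      have hsq : (E ^ s * g) * (E ^ s * g) = 0 := by
        have hz1 : E ^ s * E ^ s = 0 := by
          rw [← pow_add]; exact hpow _ (by omega)
        have hz2' : E ^ s * E ^ (s - 1) = 0 := by
          rw [← pow_add]; exact hpow _ (by omega)
        calc (E ^ s * g) * (E ^ s * g) = E ^ s * (g * E ^ s) * g := by noncomm_ring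
          _ = E ^ s * (E ^ s * g - s • E ^ (s - 1)) * g := by rw [hgE]
          _ = 0 := by
              rw [mul_sub, sub_mul, mul_smul_comm, smul_mul_assoc, ← mul_assoc, hz1, zero_mul,
                zero_mul, hz2']
              simp
      have htr0 : f₀.trace = 0 := by
        have hstep : f₀.trace = (f₀ * (E * g - g * E)).trace := by rw [hg, mul_one]
        rw [hstep, mul_sub, Matrix.trace_sub]
        have hcyc : (f₀ * (g * E)).trace = ((E * f₀) * g).trace := by
          rw [← mul_assoc, Matrix.trace_mul_cycle]
        rw [hcyc, ← mul_assoc, ← Matrix.trace_sub, ← sub_mul]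
        have hns : f₀ * E - E * f₀ = -(E ^ s) := by rw [← hf₀, neg_sub]
        rw [hns, neg_mul, Matrix.trace_neg, neg_eq_zero]
        exact trace_eq_zero_of_sq_zero hsq
      exact ⟨f₀, hmain f₀ hf₀ htr0⟩

open LieAlgebra.SpecialLinear in
/-- For `m ≥ 2`, every nonzero nilpotent `e ∈ sl_m(k)`, `k` algebraically
closed of characteristic 2, extends to an `sl₂`-triple: there is `f` with
`h := ⁅e,f⁆ ≠ 0` and `⁅h,e⁆ = 0 = ⁅h,f⁆`. -/
theorem stmt_14 (k : Type*) [Field k] [IsAlgClosed k] [CharP k 2]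
    (m : ℕ) (hm : 2 ≤ m)
    (e : sl (Fin m) k) (hne : e ≠ 0) (he : IsNilpotent e.val) :
    ∃ f : sl (Fin m) k, ⁅e, f⁆ ≠ 0 ∧ ⁅⁅e, f⁆, e⁆ = 0 ∧ ⁅⁅e, f⁆, f⁆ = 0 := by
  have hE : e.val ≠ 0 := by
    intro h
    exact hne (Subtype.ext h)
  obtain ⟨F, htrF, hHne, hc1, hc2⟩ := key e.val hE he
  have hFmem : F ∈ sl (Fin m) k := by
    show F ∈ LinearMap.ker (Matrix.traceLinearMap (Fin m) k k)
    rw [LinearMap.mem_ker]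
    exact htrF
  refine ⟨⟨F, hFmem⟩, ?_, ?_, ?_⟩
  · intro h0
    apply hHne
    have h1 := congrArg Subtype.val h0
    rwa [sl_bracket] at h1
  · apply Subtype.ext
    rw [sl_bracket, sl_bracket]
    show _ = (0 : sl (Fin m) k).val
    rw [← hc1, sub_self]
    rfl
  · apply Subtype.ext
    rw [sl_bracket, sl_bracket]
    show _ = (0 : sl (Fin m) k).val
    rw [← hc2, sub_self]
    rfl
end

section
/- Let k be an algebraically closed field of characteristic 2 and let e be a nonzero nilpotent 2×2 matrix over k. Then there is no 2×2 matrix f over k such that ⁅e,f⁆ is not a scalar multiple of the identity matrix while both ⁅⁅e,f⁆,e⁆ and ⁅⁅e,f⁆,f⁆ are scalar multiples of the identity matrix. (Equivalently, in pgl_2(k) = gl_2(k)/k·1 no nonzero nilpotent element extends to an sl₂-triple.) -/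
/-!
For 2×2 matrices the polarized Cayley–Hamilton identity gives
`AB + BA = tr A • B + tr B • A + (tr (AB) - tr A tr B) • 1`, and in characteristic 2 the left side
is `⁅A, B⁆`. A nilpotent `e` is traceless, so `⁅e, f⁆ = tr f • e + scalar` and hence
`⁅⁅e, f⁆, f⁆ = tr f • ⁅e, f⁆`. If this is scalar, then either `tr f ≠ 0` and `⁅e, f⁆` is scalar,
or `tr f = 0` and `⁅e, f⁆` is scalar anyway.
-/

namespace Matrix

variable {R : Type*} [CommRing R]

attribute [local instance] LieRing.ofAssociativeRing

theorem lie_eq_trace_smul_add_scalar_of_trace_eq_zero (h2 : (2 : R) = 0)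
    {e : Matrix (Fin 2) (Fin 2) R} (he : e.trace = 0) (f : Matrix (Fin 2) (Fin 2) R) :
    ⁅e, f⁆ = f.trace • e + (e * f).trace • 1 := by
  rw [trace_fin_two] at he
  rw [Ring.lie_def]
  ext i j
  fin_cases i <;> fin_cases j <;>
    simp only [Fin.zero_eta, Fin.mk_one, Fin.isValue, sub_apply, add_apply, smul_apply, smul_eq_mul,
      mul_apply, Fin.sum_univ_two, trace_fin_two, one_apply_eq, one_apply_ne, ne_eq, zero_ne_one,
      one_ne_zero, not_false_eq_true, mul_one, mul_zero, add_zero]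
  · linear_combination -(e 1 0 * f 0 1 + e 0 0 * f 0 0) * h2 - f 1 1 * he
  · linear_combination -(e 1 1 * f 0 1 + e 0 1 * f 0 0) * h2 + f 0 1 * he
  · linear_combination (e 1 1 * f 1 0 - e 1 0 * f 1 1) * h2 - f 1 0 * he
  · linear_combination -(e 0 1 * f 1 0 + e 1 1 * f 1 1) * h2 - f 0 0 * he

theorem lie_lie_eq_trace_smul_lie_of_trace_eq_zero (h2 : (2 : R) = 0)
    {e : Matrix (Fin 2) (Fin 2) R} (he : e.trace = 0) (f : Matrix (Fin 2) (Fin 2) R) :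
    ⁅⁅e, f⁆, f⁆ = f.trace • ⁅e, f⁆ := by
  conv_lhs => rw [lie_eq_trace_smul_add_scalar_of_trace_eq_zero h2 he f]
  rw [add_lie, smul_lie, smul_lie, (Commute.one_left f).lie_eq, smul_zero, add_zero]

end Matrix

open Matrix in
theorem stmt_16_general (k : Type*) [Field k] [CharP k 2]
    (e : Matrix (Fin 2) (Fin 2) k) (he : IsNilpotent e) :
    ¬ ∃ f : Matrix (Fin 2) (Fin 2) k,
        (¬ ∃ c : k, ⁅e, f⁆ = c • (1 : Matrix (Fin 2) (Fin 2) k)) ∧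
        (∃ c : k, ⁅⁅e, f⁆, e⁆ = c • (1 : Matrix (Fin 2) (Fin 2) k)) ∧
        (∃ c : k, ⁅⁅e, f⁆, f⁆ = c • (1 : Matrix (Fin 2) (Fin 2) k)) := by
  rintro ⟨f, hns, -, c, hc⟩
  have h2 : (2 : k) = 0 := CharTwo.two_eq_zero
  have htr : e.trace = 0 := (isNilpotent_trace_of_isNilpotent he).eq_zero
  rw [lie_lie_eq_trace_smul_lie_of_trace_eq_zero h2 htr] at hc
  apply hns
  rcases eq_or_ne f.trace 0 with h0 | h0
  · exact ⟨_, by rw [lie_eq_trace_smul_add_scalar_of_trace_eq_zero h2 htr, h0, zero_smul, zero_add]⟩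
  · exact ⟨f.trace⁻¹ * c, by rw [← smul_smul, ← hc, inv_smul_smul₀ h0]⟩

/-- For a nonzero nilpotent 2×2 matrix `e` over an algebraically closed
field of characteristic 2, there is no `f` such that `⁅e,f⁆` is not scalar while
`⁅⁅e,f⁆,e⁆` and `⁅⁅e,f⁆,f⁆` are both scalar; i.e. in `pgl₂(k)` no nonzero nilpotent
extends to an `sl₂`-triple. -/
theorem stmt_16 (k : Type*) [Field k] [IsAlgClosed k] [CharP k 2]
    (e : Matrix (Fin 2) (Fin 2) k) (hne : e ≠ 0) (he : IsNilpotent e) :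
    ¬ ∃ f : Matrix (Fin 2) (Fin 2) k,
        (¬ ∃ c : k, ⁅e, f⁆ = c • (1 : Matrix (Fin 2) (Fin 2) k)) ∧
        (∃ c : k, ⁅⁅e, f⁆, e⁆ = c • (1 : Matrix (Fin 2) (Fin 2) k)) ∧
        (∃ c : k, ⁅⁅e, f⁆, f⁆ = c • (1 : Matrix (Fin 2) (Fin 2) k)) :=
  stmt_16_general k e he
end

section
/- Let k be a field of characteristic 2, let n ≥ 1, let J ⊆ {1, …, n} and let e = Σ_{j∈J} E_{j,j+1} ∈ sl_{n+1}(k) be a sum of superdiagonal matrix units (a sum of simple root vectors). Then e lies in the range of (ad e)² if and only if there exist scalars a_j ∈ k (j ∈ J) such that (ad e)²(Σ_{j∈J} a_j E_{j+1,j}) = e. -/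
/-!
In characteristic 2, `(ad e)² y = e²y + ye²`. Grade matrices so that `E_{p,q}` has degree `q - p`.
Then `e` is homogeneous of degree 1 and `y ↦ e²y + ye²` raises degrees by 2, so `e = (ad e)² x`
forces `e = (ad e)² x₋₁`, where `x₋₁ = ∑_j x_{j+1,j} E_{j+1,j}` is the degree `-1` part of `x`.
The terms with `j ∉ J` can be dropped, since `e E_{j+1,j} = 0 = E_{j+1,j} e` for them.
-/

namespace Matrix

section Grading

variable {ι G R : Type*} [AddCommGroup G] {deg : ι → G}

variable (deg) in
def IsHomogeneous [Zero R] (d : G) (A : Matrix ι ι R) : Prop :=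
  ∀ i j, deg j - deg i ≠ d → A i j = 0

theorem isHomogeneous_single [DecidableEq ι] [Zero R] (i j : ι) (c : R) :
    IsHomogeneous deg (deg j - deg i) (single i j c) := by
  intro i' j' h
  apply single_apply_of_ne
  rintro ⟨rfl, rfl⟩
  exact h rfl

theorem IsHomogeneous.sum [AddCommMonoid R] {κ : Type*} {s : Finset κ} {d : G}
    {A : κ → Matrix ι ι R} (hA : ∀ x ∈ s, IsHomogeneous deg d (A x)) :
    IsHomogeneous deg d (∑ x ∈ s, A x) := by
  intro i j h
  rw [sum_apply]
  exact Finset.sum_eq_zero fun x hx => hA x hx i j h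

theorem IsHomogeneous.mul [Fintype ι] [NonUnitalNonAssocSemiring R] {a b : G}
    {A B : Matrix ι ι R} (hA : IsHomogeneous deg a A) (hB : IsHomogeneous deg b B) :
    IsHomogeneous deg (a + b) (A * B) := by
  intro i j h
  rw [mul_apply]
  refine Finset.sum_eq_zero fun r _ => ?_
  by_cases har : deg r - deg i = a
  · rw [hB r j (fun hrb => h (by rw [← har, ← hrb]; abel)), mul_zero]
  · rw [hA i r har, zero_mul]

variable [DecidableEq G]

variable (deg) in
def homogeneousComponent [Zero R] (d : G) (A : Matrix ι ι R) : Matrix ι ι R :=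
  of fun i j => if deg j - deg i = d then A i j else 0

theorem homogeneousComponent_add [AddZeroClass R] (d : G) (A B : Matrix ι ι R) :
    homogeneousComponent deg d (A + B) =
      homogeneousComponent deg d A + homogeneousComponent deg d B := by
  ext i j
  simp only [homogeneousComponent, of_apply, add_apply]
  split_ifs <;> simp

theorem IsHomogeneous.homogeneousComponent_eq [Zero R] {d : G} {A : Matrix ι ι R}
    (hA : IsHomogeneous deg d A) : homogeneousComponent deg d A = A := by
  ext i j
  simp only [homogeneousComponent, of_apply, ite_eq_left_iff]
  exact fun h => (hA i j h).symm

variable [Fintype ι] [NonUnitalNonAssocSemiring R]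

theorem IsHomogeneous.homogeneousComponent_mul_left {a : G} {A : Matrix ι ι R}
    (hA : IsHomogeneous deg a A) (d : G) (X : Matrix ι ι R) :
    homogeneousComponent deg (a + d) (A * X) = A * homogeneousComponent deg d X := by
  ext i j
  simp only [homogeneousComponent, of_apply, mul_apply, mul_ite, mul_zero]
  have hdeg : ∀ r, deg r - deg i = a → (deg j - deg r = d ↔ deg j - deg i = a + d) := by
    intro r har
    rw [← har, ← sub_add_sub_cancel (deg j) (deg r) (deg i), add_comm, add_right_inj]
  split_ifs with h
  · refine Finset.sum_congr rfl fun r _ => ?_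
    by_cases har : deg r - deg i = a
    · rw [if_pos ((hdeg r har).2 h)]
    · simp [hA i r har]
  · refine (Finset.sum_eq_zero fun r _ => ?_).symm
    by_cases har : deg r - deg i = a
    · rw [if_neg (mt (hdeg r har).1 h)]
    · simp [hA i r har]

theorem IsHomogeneous.homogeneousComponent_mul_right {a : G} {A : Matrix ι ι R}
    (hA : IsHomogeneous deg a A) (d : G) (X : Matrix ι ι R) :
    homogeneousComponent deg (d + a) (X * A) = homogeneousComponent deg d X * A := by
  ext i j
  simp only [homogeneousComponent, of_apply, mul_apply, ite_mul, zero_mul]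
  have hdeg : ∀ r, deg j - deg r = a → (deg r - deg i = d ↔ deg j - deg i = d + a) := by
    intro r har
    rw [← har, ← sub_add_sub_cancel (deg j) (deg r) (deg i), add_comm, add_left_inj]
  split_ifs with h
  · refine Finset.sum_congr rfl fun r _ => ?_
    by_cases har : deg j - deg r = a
    · rw [if_pos ((hdeg r har).2 h)]
    · simp [hA r j har]
  · refine (Finset.sum_eq_zero fun r _ => ?_).symm
    by_cases har : deg j - deg r = a
    · rw [if_neg (mt (hdeg r har).1 h)]
    · simp [hA r j har]

end Grading

section Superdiagonal

variable {R : Type*} {n : ℕ}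

section Semiring

variable [Semiring R]

def superdiagonalOn (J : Finset (Fin n)) : Matrix (Fin (n + 1)) (Fin (n + 1)) R :=
  ∑ j ∈ J, single j.castSucc j.succ 1

def subdiagonalOn (J : Finset (Fin n)) (a : Fin n → R) : Matrix (Fin (n + 1)) (Fin (n + 1)) R :=
  ∑ j ∈ J, a j • single j.succ j.castSucc 1

theorem isHomogeneous_superdiagonalOn (J : Finset (Fin n)) :
    IsHomogeneous (fun i : Fin (n + 1) => (i : ℤ)) 1 (superdiagonalOn J : Matrix _ _ R) :=
  IsHomogeneous.sum fun j _ => by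
    simpa using isHomogeneous_single (deg := fun i : Fin (n + 1) => (i : ℤ)) j.castSucc j.succ 1

theorem homogeneousComponent_neg_one_eq_subdiagonalOn
    (X : Matrix (Fin (n + 1)) (Fin (n + 1)) R) :
    homogeneousComponent (fun i : Fin (n + 1) => (i : ℤ)) (-1) X =
      subdiagonalOn Finset.univ fun j => X j.succ j.castSucc := by
  ext p q
  simp only [homogeneousComponent, subdiagonalOn, of_apply, sum_apply, smul_apply, single_apply]
  induction p using Fin.cases with
  | zero => simp
  | succ p =>
    simp only [Fin.succ_inj, ite_and, smul_eq_mul, mul_ite, mul_one, mul_zero,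
      Finset.sum_ite_eq', Finset.mem_univ, if_true]
    by_cases hq : p.castSucc = q
    · subst hq
      simp
    · rw [if_neg hq, if_neg]
      rw [Fin.ext_iff] at hq
      simp only [Fin.val_castSucc, Fin.val_succ] at hq ⊢
      omega

theorem superdiagonalOn_mul_single_succ {J : Finset (Fin n)} {j : Fin n} (hj : j ∉ J)
    (i : Fin (n + 1)) (c : R) : superdiagonalOn J * single j.succ i c = 0 := by
  rw [superdiagonalOn, Finset.sum_mul]
  refine Finset.sum_eq_zero fun j' hj' => single_mul_single_of_ne _ _ _ _ ?_ _
  rw [Ne, Fin.succ_inj]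
  rintro rfl
  exact hj hj'

theorem single_castSucc_mul_superdiagonalOn {J : Finset (Fin n)} {j : Fin n} (hj : j ∉ J)
    (i : Fin (n + 1)) (c : R) : single i j.castSucc c * superdiagonalOn J = 0 := by
  rw [superdiagonalOn, Finset.mul_sum]
  refine Finset.sum_eq_zero fun j' hj' => single_mul_single_of_ne _ _ _ _ ?_ _
  rw [Ne, Fin.castSucc_inj]
  rintro rfl
  exact hj hj'

theorem subdiagonalOn_univ_mul_superdiagonalOn (J : Finset (Fin n)) (a : Fin n → R) :
    subdiagonalOn Finset.univ a * superdiagonalOn J = subdiagonalOn J a * superdiagonalOn J := by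
  simp only [subdiagonalOn, Finset.sum_mul]
  refine (Finset.sum_subset J.subset_univ fun j _ hj => ?_).symm
  rw [smul_mul_assoc, single_castSucc_mul_superdiagonalOn hj, smul_zero]

theorem trace_subdiagonalOn (J : Finset (Fin n)) (a : Fin n → R) :
    (subdiagonalOn J a).trace = 0 := by
  simp only [subdiagonalOn, trace_sum, trace_smul]
  exact Finset.sum_eq_zero fun j _ => by
    rw [trace_single_eq_of_ne _ _ _ (Fin.castSucc_lt_succ (i := j)).ne', smul_zero]

end Semiring

section CommSemiring

variable [CommSemiring R]

theorem superdiagonalOn_mul_subdiagonalOn_univ (J : Finset (Fin n)) (a : Fin n → R) :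
    superdiagonalOn J * subdiagonalOn Finset.univ a = superdiagonalOn J * subdiagonalOn J a := by
  simp only [subdiagonalOn, Finset.mul_sum]
  refine (Finset.sum_subset J.subset_univ fun j _ hj => ?_).symm
  rw [mul_smul_comm, superdiagonalOn_mul_single_succ hj, smul_zero]

theorem sq_mul_subdiagonalOn_add_eq_superdiagonalOn {J : Finset (Fin n)}
    {X : Matrix (Fin (n + 1)) (Fin (n + 1)) R}
    (hX : superdiagonalOn J * superdiagonalOn J * X + X * (superdiagonalOn J * superdiagonalOn J)
      = superdiagonalOn J) :
    superdiagonalOn J * superdiagonalOn J * subdiagonalOn J (fun j => X j.succ j.castSucc) +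
      subdiagonalOn J (fun j => X j.succ j.castSucc) * (superdiagonalOn J * superdiagonalOn J)
      = superdiagonalOn J := by
  have hE := isHomogeneous_superdiagonalOn (R := R) J
  have hE2 := hE.mul hE
  calc _ = superdiagonalOn J * superdiagonalOn J * subdiagonalOn Finset.univ
          (fun j => X j.succ j.castSucc) + subdiagonalOn Finset.univ
          (fun j => X j.succ j.castSucc) * (superdiagonalOn J * superdiagonalOn J) := by
        congr 1
        · simp only [mul_assoc, superdiagonalOn_mul_subdiagonalOn_univ]
        · simp only [← mul_assoc, subdiagonalOn_univ_mul_superdiagonalOn]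
    _ = homogeneousComponent _ (1 + 1 + -1) (superdiagonalOn J * superdiagonalOn J * X) +
          homogeneousComponent _ (-1 + (1 + 1)) (X * (superdiagonalOn J * superdiagonalOn J)) := by
        rw [hE2.homogeneousComponent_mul_left, hE2.homogeneousComponent_mul_right,
          homogeneousComponent_neg_one_eq_subdiagonalOn]
    _ = superdiagonalOn J := by
        rw [show (1 + 1 + -1 : ℤ) = 1 by norm_num, show (-1 + (1 + 1) : ℤ) = 1 by norm_num,
          ← homogeneousComponent_add, hX, hE.homogeneousComponent_eq]

end CommSemiring

end Superdiagonal

end Matrix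

theorem double_commutator_eq_of_charP_two {A : Type*} [Ring A] [CharP A 2] (x y : A) :
    x * (x * y - y * x) - (x * y - y * x) * x = x * x * y + y * (x * x) := by
  calc _ = x * x * y + y * (x * x) - (x * y * x + x * y * x) := by noncomm_ring
    _ = x * x * y + y * (x * x) := by rw [CharTwo.add_self_eq_zero, sub_zero]

namespace LieAlgebra.SpecialLinear

theorem ad_sq_apply_val {ι R : Type*} [Fintype ι] [DecidableEq ι] [Nonempty ι] [CommRing R]
    [CharP R 2] (e y : sl ι R) :
    ((ad R (sl ι R) e ^ 2) y).val = e.val * e.val * y.val + y.val * (e.val * e.val) := by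
  rw [pow_two, Module.End.mul_apply, ad_apply, ad_apply, sl_bracket, sl_bracket,
    double_commutator_eq_of_charP_two]

end LieAlgebra.SpecialLinear

open LieAlgebra.SpecialLinear in
theorem stmt_17_general (k : Type*) [Field k] [CharP k 2]
    (n : ℕ) (J : Finset (Fin n))
    (e : sl (Fin (n + 1)) k)
    (he : e.val = ∑ j ∈ J, Matrix.single j.castSucc j.succ (1 : k)) :
    e ∈ LinearMap.range ((LieAlgebra.ad k (sl (Fin (n + 1)) k) e) ^ 2) ↔
      ∃ (a : Fin n → k) (f : sl (Fin (n + 1)) k),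
        f.val = ∑ j ∈ J, a j • Matrix.single j.succ j.castSucc (1 : k) ∧
        ((LieAlgebra.ad k (sl (Fin (n + 1)) k) e) ^ 2) f = e := by
  refine ⟨fun ⟨x, hx⟩ => ?_, fun ⟨_, f, _, hf⟩ => ⟨f, hf⟩⟩
  have he' : e.val = Matrix.superdiagonalOn J := he
  have hx' := congrArg Subtype.val hx
  rw [ad_sq_apply_val, he'] at hx'
  let f : sl (Fin (n + 1)) k := ⟨Matrix.subdiagonalOn J fun j => x.val j.succ j.castSucc,
    LinearMap.mem_ker.2 (Matrix.trace_subdiagonalOn J _)⟩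
  refine ⟨_, f, rfl, Subtype.ext ?_⟩
  rw [ad_sq_apply_val, he']
  exact Matrix.sq_mul_subdiagonalOn_add_eq_superdiagonalOn hx'

open LieAlgebra.SpecialLinear in
/-- Let `e = Σ_{j∈J} E_{j,j+1} ∈ sl_{n+1}(k)` be a sum of superdiagonal
matrix units, `k` of characteristic 2. Then `e ∈ range (ad e)²` iff there are scalars
`a_j` with `(ad e)² (Σ_{j∈J} a_j E_{j+1,j}) = e`. -/
theorem stmt_17 (k : Type*) [Field k] [CharP k 2]
    (n : ℕ) (hn : 1 ≤ n) (J : Finset (Fin n))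
    (e : sl (Fin (n + 1)) k)
    (he : e.val = ∑ j ∈ J, Matrix.single j.castSucc j.succ (1 : k)) :
    e ∈ LinearMap.range ((LieAlgebra.ad k (sl (Fin (n + 1)) k) e) ^ 2) ↔
      ∃ (a : Fin n → k) (f : sl (Fin (n + 1)) k),
        f.val = ∑ j ∈ J, a j • Matrix.single j.succ j.castSucc (1 : k) ∧
        ((LieAlgebra.ad k (sl (Fin (n + 1)) k) e) ^ 2) f = e :=
  stmt_17_general k n J e he
end

section
/- Let k be a field of characteristic 2, let n ≥ 1, let J ⊆ {1, …, n} and let e = Σ_{j∈J} E_{j,j+1} ∈ sl_{n+1}(k) be a sum of superdiagonal matrix units. If there exists h ∈ sl_{n+1}(k) with ⁅h,e⁆ = e, then there exists a diagonal matrix h₀ ∈ sl_{n+1}(k) with ⁅h₀,e⁆ = e. -/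
/-! Every row and every column of `e` has at most one nonzero entry, so on the support of `e`
the entry `(i, j)` of `⁅h, e⁆` is `(hᵢᵢ - hⱼⱼ) eᵢⱼ`: only the diagonal of `h` matters. Hence the
diagonal part of `h`, which is traceless like `h`, already satisfies `⁅h₀, e⁆ = e`. -/

namespace Matrix

variable {m R : Type*} [Fintype m] [CommRing R]

theorem diagonal_mul_sub_mul_diagonal_apply [DecidableEq m] (d : m → R) (A : Matrix m m R)
    (i j : m) :
    (diagonal d * A - A * diagonal d) i j = (d i - d j) * A i j := by
  rw [sub_apply, diagonal_mul, mul_diagonal, sub_mul, mul_comm (A i j)]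

theorem mul_sub_mul_apply_of_isolated (h A : Matrix m m R) {i j : m}
    (hrow : ∀ l ≠ j, A i l = 0) (hcol : ∀ l ≠ i, A l j = 0) :
    (h * A - A * h) i j = (h i i - h j j) * A i j := by
  rw [sub_apply, mul_apply, mul_apply,
    Finset.sum_eq_single i (fun l _ hl => by rw [hcol l hl, mul_zero]) (by simp),
    Finset.sum_eq_single j (fun l _ hl => by rw [hrow l hl, zero_mul]) (by simp),
    sub_mul, mul_comm (A i j)]

theorem diagonal_diag_mul_sub_eq_self [DecidableEq m] {h A : Matrix m m R}
    (hrow : ∀ i j l, A i j ≠ 0 → A i l ≠ 0 → j = l)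
    (hcol : ∀ i j l, A i j ≠ 0 → A l j ≠ 0 → i = l)
    (hh : h * A - A * h = A) :
    diagonal h.diag * A - A * diagonal h.diag = A := by
  ext i j
  rw [diagonal_mul_sub_mul_diagonal_apply]
  by_cases hij : A i j = 0
  · rw [hij, mul_zero]
  · have hrow' : ∀ l ≠ j, A i l = 0 := fun l hl => by
      by_contra hil
      exact hl (hrow i j l hij hil).symm
    have hcol' : ∀ l ≠ i, A l j = 0 := fun l hl => by
      by_contra hlj
      exact hl (hcol i j l hij hlj).symm
    simpa only [diag_apply, hh] using (mul_sub_mul_apply_of_isolated h A hrow' hcol').symm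

end Matrix

theorem Matrix.val_eq_succ_of_sum_single_apply_ne_zero {R : Type*} [Semiring R] {n : ℕ}
    (J : Finset (Fin n)) {i j : Fin (n + 1)}
    (hij : (∑ m ∈ J, Matrix.single m.castSucc m.succ (1 : R)) i j ≠ 0) :
    (j : ℕ) = i + 1 := by
  rw [Matrix.sum_apply] at hij
  obtain ⟨m, -, hm⟩ := Finset.exists_ne_zero_of_sum_ne_zero hij
  obtain ⟨rfl, rfl⟩ : m.castSucc = i ∧ m.succ = j := by
    by_contra hne
    exact hm (Matrix.single_apply_of_ne _ _ _ _ _ hne)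
  simp

open LieAlgebra.SpecialLinear in
theorem stmt_18_general (k : Type*) [Field k]
    (n : ℕ) (J : Finset (Fin n))
    (e : sl (Fin (n + 1)) k)
    (he : e.val = ∑ j ∈ J, Matrix.single j.castSucc j.succ (1 : k))
    (h : sl (Fin (n + 1)) k) (hh : ⁅h, e⁆ = e) :
    ∃ h₀ : sl (Fin (n + 1)) k, (h₀.val).IsDiag ∧ ⁅h₀, e⁆ = e := by
  have htrace : (Matrix.diagonal h.val.diag).trace = 0 := by
    rw [Matrix.trace_diagonal]
    exact h.property
  have hsuper : ∀ i j, e.val i j ≠ 0 → (j : ℕ) = i + 1 := fun i j hij =>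
    Matrix.val_eq_succ_of_sum_single_apply_ne_zero J (he ▸ hij)
  refine ⟨⟨_, htrace⟩, Matrix.isDiag_diagonal _, Subtype.ext ?_⟩
  refine Matrix.diagonal_diag_mul_sub_eq_self (fun i j l hij hil => ?_)
    (fun i j l hij hlj => ?_) (congrArg Subtype.val hh)
  · exact Fin.ext (by rw [hsuper i j hij, hsuper i l hil])
  · exact Fin.ext (by have := hsuper i j hij; have := hsuper l j hlj; omega)

open LieAlgebra.SpecialLinear in
/-- Let `e = Σ_{j∈J} E_{j,j+1} ∈ sl_{n+1}(k)` be a sum of superdiagonal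
matrix units, `k` of characteristic 2. If some `h ∈ sl_{n+1}(k)` satisfies `⁅h,e⁆ = e`,
then some diagonal `h₀ ∈ sl_{n+1}(k)` satisfies `⁅h₀,e⁆ = e`. -/
theorem stmt_18 (k : Type*) [Field k] [CharP k 2]
    (n : ℕ) (hn : 1 ≤ n) (J : Finset (Fin n))
    (e : sl (Fin (n + 1)) k)
    (he : e.val = ∑ j ∈ J, Matrix.single j.castSucc j.succ (1 : k))
    (h : sl (Fin (n + 1)) k) (hh : ⁅h, e⁆ = e) :
    ∃ h₀ : sl (Fin (n + 1)) k, (h₀.val).IsDiag ∧ ⁅h₀, e⁆ = e :=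
  stmt_18_general k n J e he h hh
end

section
/- Let k be a field of characteristic 2 and let L be the 3-dimensional Lie algebra over k with basis {e, h, f} and brackets ⁅h,e⁆ = e, ⁅h,f⁆ = f, ⁅e,f⁆ = h. Then L is not a restricted Lie algebra: there is no element y ∈ L whose adjoint map ad y equals (ad e)². In particular the derivation (ad e)² of L is not inner. -/
/-! If `ad y = (ad e)²`, then `⁅y, e⁆ = ⁅e, ⁅e, e⁆⁆ = 0` and `⁅y, h⁆ = ⁅e, -e⁆ = 0`. Writing `y` in the
basis, the first equation kills its `h`- and `f`-coordinates and the second its `e`-coordinate, so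
`y = 0`. But `(ad e)² f = ⁅e, h⁆ = -e ≠ 0`. -/

theorem Module.Basis.eq_zero_of_lie_eq_zero_of_lie_eq_zero {R L : Type*} [CommRing R]
    [LieRing L] [LieAlgebra R L] (B : Module.Basis (Fin 3) R L)
    (hhe : ⁅B 1, B 0⁆ = B 0) (hef : ⁅B 0, B 2⁆ = B 1) {y : L}
    (he : ⁅y, B 0⁆ = 0) (hh : ⁅y, B 1⁆ = 0) : y = 0 := by
  have hfe : ⁅B 2, B 0⁆ = -B 1 := by rw [← lie_skew, hef]
  have heh : ⁅B 0, B 1⁆ = -B 0 := by rw [← lie_skew, hhe]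
  have hy := B.sum_repr y
  rw [Fin.sum_univ_three] at hy
  set a := B.repr y 0
  set b := B.repr y 1
  set c := B.repr y 2
  rw [← hy] at he hh ⊢
  simp only [add_lie, smul_lie, lie_self, hhe, hfe, smul_zero, zero_add] at he
  have hb : b = 0 := by simpa using congrArg (fun z => B.repr z 0) he
  have hc : c = 0 := by simpa using congrArg (fun z => B.repr z 1) he
  simp only [hb, hc, zero_smul, add_zero, smul_lie, heh] at hh ⊢
  have ha : a = 0 := by simpa using congrArg (fun z => B.repr z 0) hh
  rw [ha, zero_smul]

theorem stmt_19_general (k : Type*) [Field k]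
    (L : Type*) [LieRing L] [LieAlgebra k L]
    (B : Module.Basis (Fin 3) k L)
    (hhe : ⁅B 1, B 0⁆ = B 0) (hef : ⁅B 0, B 2⁆ = B 1) :
    ¬ ∃ y : L, LieAlgebra.ad k L y = (LieAlgebra.ad k L (B 0)) ^ 2 := by
  rintro ⟨y, hy⟩
  have hy_apply (x : L) : ⁅y, x⁆ = ⁅B 0, ⁅B 0, x⁆⁆ := by
    simpa [pow_two] using LinearMap.congr_fun hy x
  have heh : ⁅B 0, B 1⁆ = -B 0 := by rw [← lie_skew, hhe]
  have hy0 : y = 0 := B.eq_zero_of_lie_eq_zero_of_lie_eq_zero hhe hef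
    (by rw [hy_apply, lie_self, lie_zero]) (by rw [hy_apply, heh, lie_neg, lie_self, neg_zero])
  have hf := hy_apply (B 2)
  rw [hy0, zero_lie, hef, heh] at hf
  exact B.ne_zero 0 (neg_eq_zero.mp hf.symm)

/-- The 3-dimensional simple Lie algebra `𝔰` over a field `k` of
characteristic 2 (basis `e = B 0`, `h = B 1`, `f = B 2`, brackets `⁅h,e⁆ = e`,
`⁅h,f⁆ = f`, `⁅e,f⁆ = h`) is not restricted: no element `y` satisfies
`ad y = (ad e)²`, i.e. the derivation `(ad e)²` is not inner. -/
theorem stmt_19 (k : Type*) [Field k] [CharP k 2]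
    (L : Type*) [LieRing L] [LieAlgebra k L]
    (B : Module.Basis (Fin 3) k L)
    (hhe : ⁅B 1, B 0⁆ = B 0) (hhf : ⁅B 1, B 2⁆ = B 2) (hef : ⁅B 0, B 2⁆ = B 1) :
    ¬ ∃ y : L, LieAlgebra.ad k L y = (LieAlgebra.ad k L (B 0)) ^ 2 :=
  stmt_19_general k L B hhe hef
end
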